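/- arXiv:2307.03977 — 7 statements merged into one kernel-verified Lean document; each statement's English description precedes it below -/
import Mathlib

section
/- Let $G$ be an additive abelian group, let $A$ be a finite subset of $G$ with $|A| = k \geq 1$, and let $r$ be a positive integer with $r \leq k$. Then for every integer $h \geq r$, the generalized sumset satisfies $h^{(\geq r)}A = (h-r)A + r\hat{\;}A$, i.e., it equals the sumset of the $(h-r)$-fold sumset of $A$ and the $r$-fold restricted sumset of $A$. -/
open Pointwise

/-- The generalized sumset `h^{(≥ r)}A`: elements expressible as a sum of `h` elements of `A`
(with repetition allowed) using at least `r` distinct elements of `A`. -/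
def genSumset {G : Type*} [AddCommGroup G] [DecidableEq G] (h r : ℕ) (A : Finset G) : Set G :=
  {x | ∃ s : Multiset G, s.toFinset ⊆ A ∧ Multiset.card s = h ∧
      r ≤ s.toFinset.card ∧ s.sum = x}

/-- The `h`-fold sumset `hA`: sums of `h` elements of `A` with repetition allowed
(with the convention `0A = {0}`). -/
def hfoldSumset {G : Type*} [AddCommGroup G] [DecidableEq G] (h : ℕ) (A : Finset G) : Set G :=
  {x | ∃ s : Multiset G, s.toFinset ⊆ A ∧ Multiset.card s = h ∧ s.sum = x}

/-- The `h`-fold restricted sumset `h^A`: sums of `h` pairwise distinct elements of `A`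
(with the convention `0^A = {0}`). -/
def restrictedSumset {G : Type*} [AddCommGroup G] [DecidableEq G] (r : ℕ) (A : Finset G) : Set G :=
  {x | ∃ s : Finset G, s ⊆ A ∧ s.card = r ∧ ∑ a ∈ s, a = x}

theorem sumset_decomposition {G : Type*} [AddCommGroup G] [DecidableEq G]
    (A : Finset G) (k r : ℕ) (hA : A.card = k) (hk : 1 ≤ k) (hr : 1 ≤ r) (hrk : r ≤ k)
    (h : ℕ) (hrh : r ≤ h) :
    genSumset h r A = hfoldSumset (h - r) A + restrictedSumset r A := by
  ext x
  constructor
  · rintro ⟨s, hsA, hcard, hrle, rfl⟩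
    obtain ⟨t, htsub, htcard⟩ := Finset.exists_subset_card_eq hrle
    have htle : t.val ≤ s := by
      rw [Multiset.le_iff_count]
      intro a
      by_cases ha : a ∈ t
      · have h1 : t.val.count a = 1 := Multiset.count_eq_one_of_mem t.nodup ha
        have h2 : a ∈ s := Multiset.mem_toFinset.mp (htsub ha)
        rw [h1]
        exact Multiset.one_le_count_iff_mem.mpr h2
      · simp [Multiset.count_eq_zero_of_notMem ha]
    refine ⟨(s - t.val).sum, ⟨s - t.val, ?_, ?_, rfl⟩, t.val.sum, ⟨t, htsub.trans hsA, htcard, by rw [Finset.sum]; rw [Multiset.map_id']⟩, ?_⟩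
    · intro a ha
      exact hsA (Multiset.mem_toFinset.mpr
        (Multiset.mem_of_le (Multiset.sub_le_self _ _) (Multiset.mem_toFinset.mp ha)))
    · rw [Multiset.card_sub htle, hcard, ← Finset.card_def, htcard]
    · show (s - t.val).sum + t.val.sum = s.sum
      rw [← Multiset.sum_add, tsub_add_cancel_of_le htle]
  · rintro ⟨y, ⟨s, hsA, hcard, rfl⟩, z, ⟨t, htA, htcard, rfl⟩, rfl⟩
    refine ⟨s + t.val, ?_, ?_, ?_, ?_⟩
    · intro a ha
      rw [Multiset.toFinset_add, Finset.mem_union] at ha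
      rcases ha with ha | ha
      · exact hsA ha
      · exact htA (by simpa using ha)
    · rw [Multiset.card_add, hcard, ← Finset.card_def, htcard]; omega
    · rw [← htcard]
      apply Finset.card_le_card
      intro a ha
      rw [Multiset.toFinset_add, Finset.mem_union]
      right; simpa using ha
    · show (s + t.val).sum = s.sum + ∑ a ∈ t, a
      rw [Multiset.sum_add, Finset.sum, Multiset.map_id']
end

section
/- Let $k, r$ be positive integers with $r \leq k$. Then for every integer $h \geq \max\{r, 2\}$ and every set $A$ of integers with $|A| = k$, we have $|h^{(\geq r)}A| \geq h(k-1) - r(r-1) + 1$. -/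
open Pointwise

/-!
The sumset `h^{(≥ r)}A` contains `r^A + (h - r)A`: take `r` distinct summands and fill up with
arbitrary ones. Over a linearly ordered group, Cauchy–Davenport gives `|X + A| ≥ |X| + |A| - 1`,
so each of the `h - r` extra summands adds at least `|A| - 1` elements, and it remains to see
`|r^A| ≥ r(|A| - r) + 1`. For this, remove `a = min A` from `A` to get `A'`: the set `a + (r-1)^A'`
lies in `r^A`, and so do the `|A| - r` sums `b + ΣT`, where `T` is an `(r-1)`-subset of `A'` of
maximal sum and `b ∈ A' \ T`; these exceed `a + ΣT`, hence every element of `a + (r-1)^A'`.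
-/

theorem Set.ncard_add_ncard_sub_one_le_ncard_add {G : Type*} [AddCommGroup G] [LinearOrder G]
    [IsOrderedAddMonoid G] {S T : Set G} (hS : S.Finite) (hT : T.Finite) (hS₀ : S.Nonempty)
    (hT₀ : T.Nonempty) : S.ncard + T.ncard - 1 ≤ (S + T).ncard := by
  classical
  lift S to Finset G using hS
  lift T to Finset G using hT
  rw [← Finset.coe_add, Set.ncard_coe_finset, Set.ncard_coe_finset, Set.ncard_coe_finset]
  exact cauchy_davenport_add_of_linearOrder_isCancelAdd (by simpa using hS₀) (by simpa using hT₀)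

section AnyGroup

variable {G : Type*} [AddCommGroup G] [DecidableEq G]

theorem Multiset.sum_mem_card_nsmul {A : Finset G} {s : Multiset G} (hs : ∀ a ∈ s, a ∈ A) :
    s.sum ∈ Multiset.card s • A := by
  induction s using Multiset.induction_on with
  | empty => simp
  | cons a s ih =>
    rw [Multiset.sum_cons, Multiset.card_cons, succ_nsmul']
    exact Finset.add_mem_add (hs a (Multiset.mem_cons_self a s))
      (ih fun b hb => hs b (Multiset.mem_cons_of_mem hb))

theorem genSumset_finite (h r : ℕ) (A : Finset G) : (genSumset h r A).Finite := by
  refine (h • A).finite_toSet.subset ?_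
  rintro _ ⟨s, hsA, rfl, -, rfl⟩
  exact Multiset.sum_mem_card_nsmul fun a ha => hsA (Multiset.mem_toFinset.2 ha)

theorem genSumset_add_subset (h r : ℕ) (A : Finset G) :
    genSumset h r A + ↑A ⊆ genSumset (h + 1) r A := by
  rintro _ ⟨_, ⟨s, hsA, rfl, hr, rfl⟩, a, ha, rfl⟩
  refine ⟨a ::ₘ s, ?_, Multiset.card_cons a s, ?_, by rw [Multiset.sum_cons, add_comm]⟩
  · rw [Multiset.toFinset_cons]
    exact Finset.insert_subset ha hsA
  · rw [Multiset.toFinset_cons]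
    exact hr.trans (Finset.card_le_card (Finset.subset_insert a _))

theorem restrictedSumset_subset_genSumset (r : ℕ) (A : Finset G) :
    restrictedSumset r A ⊆ genSumset r r A := by
  rintro _ ⟨s, hsA, rfl, rfl⟩
  refine ⟨s.val, by rwa [Finset.val_toFinset], rfl, by rw [Finset.val_toFinset], ?_⟩
  rw [Finset.sum_eq_multiset_sum, Multiset.map_id']

theorem restrictedSumset_eq_image (r : ℕ) (A : Finset G) :
    restrictedSumset r A = (fun s => ∑ a ∈ s, a) '' ↑(A.powersetCard r) := by
  ext x
  simp [restrictedSumset, and_assoc]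

theorem restrictedSumset_finite (r : ℕ) (A : Finset G) : (restrictedSumset r A).Finite := by
  rw [restrictedSumset_eq_image]
  exact (Finset.finite_toSet _).image _

theorem restrictedSumset_zero (A : Finset G) : restrictedSumset 0 A = {0} := by
  rw [restrictedSumset_eq_image, Finset.powersetCard_zero, Finset.coe_singleton,
    Set.image_singleton, Finset.sum_empty]

theorem image_add_restrictedSumset_subset {r : ℕ} {a : G} {A B : Finset G} (ha : a ∈ A)
    (haB : a ∉ B) (hBA : B ⊆ A) :
    (a + ·) '' restrictedSumset r B ⊆ restrictedSumset (r + 1) A := by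
  rintro _ ⟨_, ⟨S, hSB, rfl, rfl⟩, rfl⟩
  have haS : a ∉ S := fun h => haB (hSB h)
  exact ⟨insert a S, Finset.insert_subset ha (hSB.trans hBA), Finset.card_insert_of_notMem haS,
    Finset.sum_insert haS⟩

theorem image_add_sum_sdiff_subset_restrictedSumset {r : ℕ} {A B T : Finset G} (hTB : T ⊆ B)
    (hBA : B ⊆ A) (hT : T.card = r) :
    (· + ∑ x ∈ T, x) '' ↑(B \ T) ⊆ restrictedSumset (r + 1) A := by
  rintro _ ⟨b, hb, rfl⟩
  rw [Finset.mem_coe, Finset.mem_sdiff] at hb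
  exact ⟨insert b T, Finset.insert_subset (hBA hb.1) (hTB.trans hBA), by rw [Finset.card_insert_of_notMem hb.2, hT],
    Finset.sum_insert hb.2⟩

end AnyGroup

section LinearOrder

variable {G : Type*} [AddCommGroup G] [LinearOrder G] [IsOrderedAddMonoid G]

theorem ncard_restrictedSumset_erase_min'_add_le (r : ℕ) (A : Finset G) (hA : A.Nonempty)
    (hr : r + 1 ≤ A.card) :
    (restrictedSumset r (A.erase (A.min' hA))).ncard + (A.card - (r + 1))
      ≤ (restrictedSumset (r + 1) A).ncard := by
  set a := A.min' hA
  set A' := A.erase a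
  have hA' : A'.card = A.card - 1 := Finset.card_erase_of_mem (A.min'_mem hA)
  have ha_lt : ∀ b ∈ A', a < b := fun b hb =>
    lt_of_le_of_ne (A.min'_le b (Finset.mem_of_mem_erase hb)) (Finset.ne_of_mem_erase hb).symm
  obtain ⟨T, hT, hT_max⟩ := (A'.powersetCard r).exists_max_image (fun s => ∑ x ∈ s, x)
    (Finset.powersetCard_nonempty.2 (by omega))
  rw [Finset.mem_powersetCard] at hT
  set X := (a + ·) '' restrictedSumset r A'
  set Y := (· + ∑ x ∈ T, x) '' ↑(A' \ T)
  have hX : X ⊆ restrictedSumset (r + 1) A :=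
    image_add_restrictedSumset_subset (A.min'_mem hA) (fun h => (ha_lt a h).false)
      (A.erase_subset a)
  have hY : Y ⊆ restrictedSumset (r + 1) A :=
    image_add_sum_sdiff_subset_restrictedSumset hT.1 (A.erase_subset a) hT.2
  have hXY : Disjoint X Y := by
    rw [Set.disjoint_left]
    rintro _ ⟨_, ⟨S, hSA', hS, rfl⟩, rfl⟩ ⟨b, hb, hbS⟩
    have hS_le : ∑ x ∈ S, x ≤ ∑ x ∈ T, x := hT_max S (Finset.mem_powersetCard.2 ⟨hSA', hS⟩)
    have hab : a < b := ha_lt b (Finset.mem_sdiff.1 hb).1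
    have : a + ∑ x ∈ S, x < b + ∑ x ∈ T, x := add_lt_add_of_lt_of_le hab hS_le
    exact this.ne hbS.symm
  have hX_card : X.ncard = (restrictedSumset r A').ncard :=
    Set.ncard_image_of_injective _ (add_right_injective a)
  have hY_card : Y.ncard = A.card - (r + 1) := by
    rw [Set.ncard_image_of_injective _ (add_left_injective _), Set.ncard_coe_finset,
      Finset.card_sdiff_of_subset hT.1, hT.2]
    omega
  calc (restrictedSumset r A').ncard + (A.card - (r + 1)) = (X ∪ Y).ncard := by
        rw [Set.ncard_union_eq hXY ((restrictedSumset_finite r A').image _)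
          ((Finset.finite_toSet _).image _), hX_card, hY_card]
    _ ≤ (restrictedSumset (r + 1) A).ncard :=
        Set.ncard_le_ncard (Set.union_subset hX hY) (restrictedSumset_finite _ _)

theorem le_ncard_restrictedSumset (r : ℕ) (A : Finset G) (hr : r ≤ A.card) :
    r * (A.card - r) + 1 ≤ (restrictedSumset r A).ncard := by
  induction r generalizing A with
  | zero => simp [restrictedSumset_zero]
  | succ r ih =>
    have hA : A.Nonempty := Finset.card_pos.1 (by omega)
    have hA' : (A.erase (A.min' hA)).card = A.card - 1 :=
      Finset.card_erase_of_mem (A.min'_mem hA)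
    have ih' := ih (A.erase (A.min' hA)) (by omega)
    have step := ncard_restrictedSumset_erase_min'_add_le r A hA hr
    rw [hA'] at ih'
    obtain ⟨m, hm⟩ : ∃ m, A.card = r + 1 + m := ⟨A.card - (r + 1), by omega⟩
    rw [hm] at ih' step ⊢
    simp only [show r + 1 + m - 1 - r = m by omega, show r + 1 + m - (r + 1) = m by omega]
      at ih' step ⊢
    rw [add_one_mul]
    omega

theorem le_ncard_genSumset (r : ℕ) (A : Finset G) (hA : A.Nonempty) (hr : r ≤ A.card)
    {h : ℕ} (hrh : r ≤ h) :
    (h - r) * (A.card - 1) + r * (A.card - r) + 1 ≤ (genSumset h r A).ncard := by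
  induction h, hrh using Nat.le_induction with
  | base =>
    rw [Nat.sub_self, zero_mul, zero_add]
    exact (le_ncard_restrictedSumset r A hr).trans
      (Set.ncard_le_ncard (restrictedSumset_subset_genSumset r A) (genSumset_finite r r A))
  | succ h hrh ih =>
    have hne : (genSumset h r A).Nonempty := Set.nonempty_of_ncard_ne_zero (by omega)
    have cd := Set.ncard_add_ncard_sub_one_le_ncard_add (genSumset_finite h r A)
      A.finite_toSet hne (by simpa using hA)
    have hsub := Set.ncard_le_ncard (genSumset_add_subset h r A) (genSumset_finite (h + 1) r A)
    rw [Set.ncard_coe_finset] at cd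
    rw [show h + 1 - r = h - r + 1 by omega, add_one_mul]
    have : 1 ≤ A.card := Finset.card_pos.2 hA
    omega

end LinearOrder

theorem genSumset_card_lower_bound_int_general (k r : ℕ) (hk : 1 ≤ k) (hrk : r ≤ k)
    (h : ℕ) (hh : max r 2 ≤ h) (A : Finset ℤ) (hA : A.card = k) :
    h * (k - 1) - r * (r - 1) + 1 ≤ (genSumset h r A).ncard := by
  have hne : A.Nonempty := Finset.card_pos.1 (by omega)
  have hrh : r ≤ h := (le_max_left r 2).trans hh
  have hbound := le_ncard_genSumset r A hne (hA ▸ hrk) hrh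
  rw [hA] at hbound
  suffices h * (k - 1) - r * (r - 1) = (h - r) * (k - 1) + r * (k - r) by omega
  obtain ⟨m, rfl⟩ : ∃ m, k = r + m := ⟨k - r, by omega⟩
  obtain ⟨n, rfl⟩ : ∃ n, h = r + n := ⟨h - r, by omega⟩
  rcases r with _ | r
  · simp
  simp only [Nat.add_sub_cancel, Nat.add_sub_cancel_left, show r + 1 + m - 1 = r + m by omega]
  rw [Nat.sub_eq_of_eq_add]
  ring

theorem genSumset_card_lower_bound_int (k r : ℕ) (hk : 1 ≤ k) (hr : 1 ≤ r) (hrk : r ≤ k)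
    (h : ℕ) (hh : max r 2 ≤ h) (A : Finset ℤ) (hA : A.card = k) :
    h * (k - 1) - r * (r - 1) + 1 ≤ (genSumset h r A).ncard :=
  genSumset_card_lower_bound_int_general k r hk hrk h hh A hA
end

section
/- Let $k, r$ be positive integers with $k \geq 5$ and $2 \leq r \leq k - 2$, let $h = r$ or $h = r + 1$ with $h \geq 2$, and let $A$ be a set of integers with $|A| = k$. If $|h^{(\geq r)}A| = h(k-1) - r(r-1) + 1$, then $A$ is an arithmetic progression of integers. -/
open Pointwise

namespace GenAux

open Multiset

/-- A legal configuration: multiset of `h` indices, all `< k`, at least `r` distinct. -/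
def Legal (k h r : ℕ) (X : Multiset ℕ) : Prop :=
  Multiset.card X = h ∧ (∀ i ∈ X, i < k) ∧ r ≤ X.toFinset.card

/-- value of a configuration -/
def mval (a : ℕ → ℤ) (X : Multiset ℕ) : ℤ := (X.map a).sum

/-- replace one copy of p by q -/
def repl (X : Multiset ℕ) (p q : ℕ) : Multiset ℕ := q ::ₘ X.erase p

lemma card_repl {X : Multiset ℕ} {p : ℕ} (hp : p ∈ X) (q : ℕ) :
    Multiset.card (repl X p q) = Multiset.card X := by
  have h1 : X = p ::ₘ X.erase p := (Multiset.cons_erase hp).symm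
  have : Multiset.card X = Multiset.card (X.erase p) + 1 := by
    conv_lhs => rw [h1]
    simp
  simp [repl, this]

lemma mem_repl_lt {k : ℕ} {X : Multiset ℕ} (hX : ∀ i ∈ X, i < k) {p q : ℕ}
    (hq : q < k) : ∀ i ∈ repl X p q, i < k := by
  intro i hi
  rcases Multiset.mem_cons.1 hi with rfl | hi
  · exact hq
  · exact hX i (Multiset.mem_of_mem_erase hi)

lemma toFinset_card_le_insert_erase {X : Multiset ℕ} {p : ℕ} (hp : p ∈ X) :
    X.toFinset.card ≤ (X.erase p).toFinset.card + 1 := by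
  have h1 : X = p ::ₘ X.erase p := (Multiset.cons_erase hp).symm
  calc X.toFinset.card = (insert p (X.erase p).toFinset).card := by
        conv_lhs => rw [h1]
        rw [Multiset.toFinset_cons]
    _ ≤ (X.erase p).toFinset.card + 1 := Finset.card_insert_le _ _

lemma tc_repl_fresh {X : Multiset ℕ} {p q : ℕ} (hp : p ∈ X) (hq : q ∉ X) :
    X.toFinset.card ≤ (repl X p q).toFinset.card := by
  have h2 : (repl X p q).toFinset = insert q (X.erase p).toFinset := by
    simp [repl]
  have hq' : q ∉ (X.erase p).toFinset := by
    simp only [Multiset.mem_toFinset]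
    exact fun h => hq (Multiset.mem_of_mem_erase h)
  rw [h2, Finset.card_insert_of_notMem hq']
  exact toFinset_card_le_insert_erase hp

lemma tc_repl_dup {X : Multiset ℕ} {p q : ℕ} (hp : 2 ≤ X.count p) (hq : q ∈ X) :
    X.toFinset.card ≤ (repl X p q).toFinset.card := by
  have hpe : p ∈ X.erase p := by
    rw [← Multiset.count_pos, Multiset.count_erase_self]; omega
  have hsub : X.toFinset ⊆ (repl X p q).toFinset := by
    intro i hi
    simp only [Multiset.mem_toFinset] at hi ⊢
    rcases eq_or_ne i p with rfl | hip
    · exact Multiset.mem_cons_of_mem hpe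
    · rcases eq_or_ne i q with rfl | hiq
      · exact Multiset.mem_cons_self _ _
      · exact Multiset.mem_cons_of_mem ((Multiset.mem_erase_of_ne hip).2 hi)
  exact Finset.card_le_card hsub

lemma tc_repl_any {X : Multiset ℕ} {p : ℕ} (hp : p ∈ X) (q : ℕ) :
    X.toFinset.card ≤ (repl X p q).toFinset.card + 1 := by
  have h2 : (repl X p q).toFinset = insert q (X.erase p).toFinset := by simp [repl]
  have : (X.erase p).toFinset.card ≤ (repl X p q).toFinset.card := by
    rw [h2]; exact Finset.card_le_card (Finset.subset_insert _ _)
  have := toFinset_card_le_insert_erase hp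
  omega

lemma mval_repl (a : ℕ → ℤ) {X : Multiset ℕ} {p : ℕ} (hp : p ∈ X) (q : ℕ) :
    mval a (repl X p q) = mval a X + a q - a p := by
  have h1 : X = p ::ₘ X.erase p := (Multiset.cons_erase hp).symm
  have h2 : mval a X = a p + mval a (X.erase p) := by
    conv_lhs => rw [h1]
    simp [mval]
  simp [repl, mval] at h2 ⊢
  omega

lemma sum_repl {X : Multiset ℕ} {p : ℕ} (hp : p ∈ X) (q : ℕ) :
    (repl X p q).sum + p = X.sum + q := by
  have h1 : X = p ::ₘ X.erase p := (Multiset.cons_erase hp).symm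
  have h2 : X.sum = p + (X.erase p).sum := by
    conv_lhs => rw [h1]
    rw [Multiset.sum_cons]
  simp [repl, Multiset.sum_cons, h2]
  omega

end GenAux

namespace GenAux

/-- Bottom configuration. -/
def Bot (h r : ℕ) : Multiset ℕ := (Finset.range r).val + Multiset.replicate (h - r) 0

/-- Top configuration. -/
def Top (k h r : ℕ) : Multiset ℕ :=
  (Finset.Ico (k - r) k).val + Multiset.replicate (h - r) (k - 1)

lemma legal_bot {k h r : ℕ} (hrh : r ≤ h) (hrk : r ≤ k) (hk : 1 ≤ k) : Legal k h r (Bot h r) := by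
  refine ⟨?_, ?_, ?_⟩
  · simp [Bot]; omega
  · intro i hi
    rw [Bot, Multiset.mem_add] at hi
    rcases hi with hi | hi
    · have : i < r := by simpa using hi
      omega
    · have := Multiset.eq_of_mem_replicate hi
      omega
  · have hsub : Finset.range r ⊆ (Bot h r).toFinset := by
      intro i hi
      simp only [Multiset.mem_toFinset, Bot, Multiset.mem_add]
      exact Or.inl (by simpa using hi)
    calc r = (Finset.range r).card := by simp
    _ ≤ _ := Finset.card_le_card hsub

lemma legal_top {k h r : ℕ} (hrh : r ≤ h) (hrk : r ≤ k) (hk : 1 ≤ k) :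
    Legal k h r (Top k h r) := by
  refine ⟨?_, ?_, ?_⟩
  · simp [Top]; omega
  · intro i hi
    rw [Top, Multiset.mem_add] at hi
    rcases hi with hi | hi
    · have : k - r ≤ i ∧ i < k := by simpa using hi
      omega
    · have := Multiset.eq_of_mem_replicate hi
      omega
  · have hsub : Finset.Ico (k - r) k ⊆ (Top k h r).toFinset := by
      intro i hi
      simp only [Multiset.mem_toFinset, Top, Multiset.mem_add]
      exact Or.inl (by simpa using hi)
    calc r = (Finset.Ico (k - r) k).card := by simp [Nat.card_Ico]; omega
    _ ≤ _ := Finset.card_le_card hsub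

lemma sum_top_eq {k h r : ℕ} (hr : 2 ≤ r) (hrh : r ≤ h) (hrk : r + 2 ≤ k) :
    (Top k h r).sum + r * (r - 1) = (Bot h r).sum + h * (k - 1) := by
  have hB : (Bot h r).sum = (Finset.range r).val.sum := by
    rw [Bot, Multiset.sum_add, Multiset.sum_replicate]
    simp
  have hT : (Top k h r).sum = (Finset.Ico (k - r) k).val.sum + (h - r) * (k - 1) := by
    rw [Top, Multiset.sum_add, Multiset.sum_replicate, smul_eq_mul]
  have hval : ∀ F : Finset ℕ, F.val.sum = ∑ i ∈ F, i := by
    intro F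
    rw [Finset.sum]
    simp
  have hIco : (Finset.Ico (k - r) k).val.sum = r * (k - r) + (Finset.range r).val.sum := by
    rw [hval, hval, Finset.sum_Ico_eq_sum_range]
    have e : k - (k - r) = r := by omega
    rw [e, Finset.sum_add_distrib]
    simp [Finset.sum_const, smul_eq_mul, mul_comm]
  rw [hB, hT, hIco]
  set G := (Finset.range r).val.sum
  obtain ⟨u, rfl⟩ : ∃ u, r = u + 2 := ⟨r - 2, by omega⟩
  obtain ⟨t, rfl⟩ : ∃ t, h = (u + 2) + t := ⟨h - (u + 2), by omega⟩
  obtain ⟨s2, rfl⟩ : ∃ s2, k = (u + 2) + 2 + s2 := ⟨k - (u + 2) - 2, by omega⟩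
  have e1 : (u + 2) + 2 + s2 - (u + 2) = s2 + 2 := by omega
  have e2 : (u + 2) + 2 + s2 - 1 = u + s2 + 3 := by omega
  have e3 : (u + 2) + t - (u + 2) = t := by omega
  have e4 : (u + 2) - 1 = u + 1 := by omega
  rw [e1, e2, e3, e4]
  ring

lemma mul_le_mul_nat {r h k : ℕ} (hrh : r ≤ h) (hrk : r + 2 ≤ k) :
    r * (r - 1) ≤ h * (k - 1) :=
  Nat.mul_le_mul hrh (by omega)

/-- if the toFinset is successor-closed below k then it is an interval ending at k -/
lemma tf_interval_up {k : ℕ} {F : Finset ℕ} (hne : F.Nonempty) (hlt : ∀ i ∈ F, i < k)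
    (hcl : ∀ p ∈ F, p + 1 < k → p + 1 ∈ F) : F = Finset.Ico (F.min' hne) k := by
  have key : ∀ x, F.min' hne ≤ x → x < k → x ∈ F := by
    intro x hx
    induction x, hx using Nat.le_induction with
    | base => intro _; exact F.min'_mem hne
    | succ n hn ih =>
      intro hnk
      exact hcl n (ih (by omega)) hnk
  ext x
  simp only [Finset.mem_Ico]
  exact ⟨fun hx => ⟨F.min'_le x hx, hlt x hx⟩, fun ⟨h1, h2⟩ => key x h1 h2⟩

/-- if the toFinset is predecessor-closed then it is a range -/
lemma tf_interval_down {F : Finset ℕ} (hne : F.Nonempty)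
    (hcl : ∀ p ∈ F, 0 < p → p - 1 ∈ F) : F = Finset.range (F.max' hne + 1) := by
  have key : ∀ j, j ≤ F.max' hne → F.max' hne - j ∈ F := by
    intro j
    induction j with
    | zero => intro _; simpa using F.max'_mem hne
    | succ n ih =>
      intro hj
      have hn : F.max' hne - n ∈ F := ih (by omega)
      have h0 : 0 < F.max' hne - n := by omega
      have : F.max' hne - (n + 1) = (F.max' hne - n) - 1 := by omega
      rw [this]
      exact hcl _ hn h0
  ext x
  simp only [Finset.mem_range]
  constructor
  · intro hx; have := F.le_max' x hx; omega
  · intro hx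
    have hx' : x ≤ F.max' hne := by omega
    have := key (F.max' hne - x) (by omega)
    have hxx : F.max' hne - (F.max' hne - x) = x := by omega
    rwa [hxx] at this

end GenAux

namespace GenAux

lemma exists_up_move {k h r : ℕ} (hr : 2 ≤ r) (hrh : r ≤ h) (hhr : h ≤ r + 1)
    (hrk : r + 2 ≤ k) {X : Multiset ℕ} (hX : Legal k h r X) (hne : X ≠ Top k h r) :
    ∃ p ∈ X, p + 1 < k ∧ Legal k h r (repl X p (p + 1)) := by
  obtain ⟨hcard, hltk, htc⟩ := hX
  by_cases hc1 : ∃ p ∈ X, p + 1 < k ∧ (p + 1) ∉ X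
  · obtain ⟨p, hp, hpk, hp1⟩ := hc1
    exact ⟨p, hp, hpk, (card_repl hp _).trans hcard, mem_repl_lt hltk hpk,
      le_trans htc (tc_repl_fresh hp hp1)⟩
  push_neg at hc1
  have hFne : X.toFinset.Nonempty := Finset.card_pos.1 (by omega)
  have hclF : ∀ p ∈ X.toFinset, p + 1 < k → p + 1 ∈ X.toFinset := by
    intro p hp hpk
    rw [Multiset.mem_toFinset] at hp ⊢
    exact hc1 p hp hpk
  have hltF : ∀ i ∈ X.toFinset, i < k := fun i hi => hltk i (Multiset.mem_toFinset.1 hi)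
  have hF : X.toFinset = Finset.Ico (X.toFinset.min' hFne) k := tf_interval_up hFne hltF hclF
  set m := X.toFinset.min' hFne with hm
  have hmX : m ∈ X := Multiset.mem_toFinset.1 (X.toFinset.min'_mem hFne)
  have hmk : m < k := hltk m hmX
  have hcardF : X.toFinset.card = k - m := by rw [hF]; simp
  by_cases hdup : ∃ w ∈ X, 2 ≤ X.count w ∧ w + 1 < k
  · obtain ⟨w, hw, hw2, hwk⟩ := hdup
    exact ⟨w, hw, hwk, (card_repl hw _).trans hcard, mem_repl_lt hltk hwk,
      le_trans htc (tc_repl_dup hw2 (hc1 w hw hwk))⟩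
  push_neg at hdup
  have hdup' : ∀ w ∈ X, 2 ≤ X.count w → w = k - 1 := by
    intro w hw h2
    have h3 := hdup w hw h2
    have h4 := hltk w hw
    omega
  have htcle : X.toFinset.card ≤ h := hcard ▸ X.toFinset_card_le
  rcases eq_or_lt_of_le htcle with heq | hlt2
  · -- X is nodup
    have hnd : X.Nodup := Multiset.toFinset_card_eq_card_iff_nodup.1 (by omega)
    have hXval : X = X.toFinset.val := by
      rw [Multiset.toFinset_val, Multiset.dedup_eq_self.2 hnd]
    have hhcases : h = r ∨ h = r + 1 := by omega
    rcases hhcases with heq2 | heq2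
    · -- h = r : X = Top, contradiction
      exfalso
      apply hne
      have hmval : m = k - r := by omega
      rw [hXval, hF, hmval]
      simp [Top, heq2]
    · -- h = r + 1 : move the minimum up
      have hmval : m = k - (r + 1) := by omega
      refine ⟨m, hmX, by omega, (card_repl hmX _).trans hcard, mem_repl_lt hltk (by omega), ?_⟩
      have := tc_repl_any hmX (m + 1)
      omega
  · -- X has a duplicate; tc = r, h = r + 1
    have htceq : X.toFinset.card = r := by omega
    have hheq : h = r + 1 := by omega
    have hnnd : ¬ X.Nodup := by
      intro hnd
      have := Multiset.toFinset_card_eq_card_iff_nodup.2 hnd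
      omega
    obtain ⟨w, hw2⟩ : ∃ w, 2 ≤ X.count w := by
      by_contra hcon
      push_neg at hcon
      exact hnnd (Multiset.nodup_iff_count_le_one.2 fun a => by have := hcon a; omega)
    have hwX : w ∈ X := Multiset.count_pos.1 (by omega)
    have hwval : w = k - 1 := hdup' w hwX hw2
    subst hwval
    -- show X = Top, contradiction
    exfalso
    apply hne
    have hmval : m = k - r := by omega
    have hFI : X.toFinset = Finset.Ico (k - r) k := by rw [hF, hmval]
    have hcnt1 : ∀ i ∈ X.toFinset, i ≠ k - 1 → X.count i = 1 := by
      intro i hi hik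
      have hiX : i ∈ X := Multiset.mem_toFinset.1 hi
      have hpos : 0 < X.count i := Multiset.count_pos.2 hiX
      by_contra hcon
      exact hik (hdup' i hiX (by omega))
    have hk1F : (k - 1 : ℕ) ∈ X.toFinset := Multiset.mem_toFinset.2 hwX
    have hsum : ∑ i ∈ X.toFinset, X.count i = Multiset.card X :=
      Multiset.toFinset_sum_count_eq X
    rw [← Finset.add_sum_erase _ _ hk1F] at hsum
    have herase : ∑ i ∈ X.toFinset.erase (k - 1), X.count i
        = (X.toFinset.erase (k - 1)).card := by
      rw [Finset.card_eq_sum_ones]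
      refine Finset.sum_congr rfl fun i hi => ?_
      exact hcnt1 i (Finset.mem_of_mem_erase hi) (Finset.ne_of_mem_erase hi)
    have hcerase : (X.toFinset.erase (k - 1)).card = r - 1 := by
      rw [Finset.card_erase_of_mem hk1F, htceq]
    have hcount_k1 : X.count (k - 1) = 2 := by omega
    have hIconodup := (Finset.Ico (k - r) k).nodup
    refine Multiset.ext.2 fun i => ?_
    rw [Top]
    rw [Multiset.count_add, Multiset.count_replicate]
    by_cases hik : i = k - 1
    · subst hik
      have hmem : (k - 1 : ℕ) ∈ Finset.Ico (k - r) k := by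
        simp only [Finset.mem_Ico]; omega
      rw [hcount_k1, Multiset.count_eq_one_of_mem hIconodup hmem]
      simp [hheq]
    · by_cases hiF : i ∈ X.toFinset
      · have hmem : i ∈ Finset.Ico (k - r) k := hFI ▸ hiF
        rw [hcnt1 i hiF hik, Multiset.count_eq_one_of_mem hIconodup hmem]
        simp [Ne.symm hik]
      · have hnmem : i ∉ Finset.Ico (k - r) k := fun hc => hiF (hFI ▸ hc)
        rw [Multiset.count_eq_zero.2 (fun hc => hiF (Multiset.mem_toFinset.2 hc)),
          Multiset.count_eq_zero.2 (fun hc => hnmem hc)]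
        simp [Ne.symm hik]

lemma exists_down_move {k h r : ℕ} (hr : 2 ≤ r) (hrh : r ≤ h) (hhr : h ≤ r + 1)
    (hrk : r + 2 ≤ k) {X : Multiset ℕ} (hX : Legal k h r X) (hne : X ≠ Bot h r) :
    ∃ p ∈ X, 1 ≤ p ∧ Legal k h r (repl X p (p - 1)) := by
  obtain ⟨hcard, hltk, htc⟩ := hX
  by_cases hc1 : ∃ p ∈ X, 1 ≤ p ∧ (p - 1) ∉ X
  · obtain ⟨p, hp, hp1, hpf⟩ := hc1
    exact ⟨p, hp, hp1, (card_repl hp _).trans hcard,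
      mem_repl_lt hltk (by have := hltk p hp; omega),
      le_trans htc (tc_repl_fresh hp hpf)⟩
  push_neg at hc1
  have hFne : X.toFinset.Nonempty := Finset.card_pos.1 (by omega)
  have hclF : ∀ p ∈ X.toFinset, 0 < p → p - 1 ∈ X.toFinset := by
    intro p hp hpk
    rw [Multiset.mem_toFinset] at hp ⊢
    exact hc1 p hp hpk
  have hF : X.toFinset = Finset.range (X.toFinset.max' hFne + 1) := tf_interval_down hFne hclF
  set M := X.toFinset.max' hFne with hM
  have hMX : M ∈ X := Multiset.mem_toFinset.1 (X.toFinset.max'_mem hFne)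
  have hMk : M < k := hltk M hMX
  have hcardF : X.toFinset.card = M + 1 := by rw [hF]; simp
  by_cases hdup : ∃ w ∈ X, 2 ≤ X.count w ∧ 1 ≤ w
  · obtain ⟨w, hw, hw2, hwk⟩ := hdup
    exact ⟨w, hw, hwk, (card_repl hw _).trans hcard,
      mem_repl_lt hltk (by have := hltk w hw; omega),
      le_trans htc (tc_repl_dup hw2 (hc1 w hw hwk))⟩
  push_neg at hdup
  have hdup' : ∀ w ∈ X, 2 ≤ X.count w → w = 0 := by
    intro w hw h2
    have h3 := hdup w hw h2
    omega
  have htcle : X.toFinset.card ≤ h := hcard ▸ X.toFinset_card_le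
  rcases eq_or_lt_of_le htcle with heq | hlt2
  · have hnd : X.Nodup := Multiset.toFinset_card_eq_card_iff_nodup.1 (by omega)
    have hXval : X = X.toFinset.val := by
      rw [Multiset.toFinset_val, Multiset.dedup_eq_self.2 hnd]
    have hhcases : h = r ∨ h = r + 1 := by omega
    rcases hhcases with heq2 | heq2
    · exfalso
      apply hne
      have hMval : M + 1 = r := by omega
      rw [hXval, hF, hMval]
      simp [Bot, heq2]
    · have hMval : M = r := by omega
      refine ⟨M, hMX, by omega, (card_repl hMX _).trans hcard,
        mem_repl_lt hltk (by omega), ?_⟩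
      have := tc_repl_any hMX (M - 1)
      omega
  · have htceq : X.toFinset.card = r := by omega
    have hheq : h = r + 1 := by omega
    have hnnd : ¬ X.Nodup := by
      intro hnd
      have := Multiset.toFinset_card_eq_card_iff_nodup.2 hnd
      omega
    obtain ⟨w, hw2⟩ : ∃ w, 2 ≤ X.count w := by
      by_contra hcon
      push_neg at hcon
      exact hnnd (Multiset.nodup_iff_count_le_one.2 fun a => by have := hcon a; omega)
    have hwX : w ∈ X := Multiset.count_pos.1 (by omega)
    have hwval : w = 0 := hdup' w hwX hw2
    subst hwval
    exfalso
    apply hne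
    have hMval : M + 1 = r := by omega
    have hFI : X.toFinset = Finset.range r := by rw [hF, hMval]
    have hcnt1 : ∀ i ∈ X.toFinset, i ≠ 0 → X.count i = 1 := by
      intro i hi hik
      have hiX : i ∈ X := Multiset.mem_toFinset.1 hi
      have hpos : 0 < X.count i := Multiset.count_pos.2 hiX
      by_contra hcon
      exact hik (hdup' i hiX (by omega))
    have hk1F : (0 : ℕ) ∈ X.toFinset := Multiset.mem_toFinset.2 hwX
    have hsum : ∑ i ∈ X.toFinset, X.count i = Multiset.card X :=
      Multiset.toFinset_sum_count_eq X
    rw [← Finset.add_sum_erase _ _ hk1F] at hsum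
    have herase : ∑ i ∈ X.toFinset.erase 0, X.count i
        = (X.toFinset.erase 0).card := by
      rw [Finset.card_eq_sum_ones]
      refine Finset.sum_congr rfl fun i hi => ?_
      exact hcnt1 i (Finset.mem_of_mem_erase hi) (Finset.ne_of_mem_erase hi)
    have hcerase : (X.toFinset.erase 0).card = r - 1 := by
      rw [Finset.card_erase_of_mem hk1F, htceq]
    have hcount_k1 : X.count 0 = 2 := by omega
    have hIconodup := (Finset.range r).nodup
    refine Multiset.ext.2 fun i => ?_
    rw [Bot]
    rw [Multiset.count_add, Multiset.count_replicate]
    by_cases hik : i = 0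
    · subst hik
      have hmem : (0 : ℕ) ∈ Finset.range r := by
        simp only [Finset.mem_range]; omega
      rw [hcount_k1, Multiset.count_eq_one_of_mem hIconodup hmem]
      simp [hheq]
    · by_cases hiF : i ∈ X.toFinset
      · have hmem : i ∈ Finset.range r := hFI ▸ hiF
        rw [hcnt1 i hiF hik, Multiset.count_eq_one_of_mem hIconodup hmem]
        simp [Ne.symm hik]
      · have hnmem : i ∉ Finset.range r := fun hc => hiF (hFI ▸ hc)
        rw [Multiset.count_eq_zero.2 (fun hc => hiF (Multiset.mem_toFinset.2 hc)),
          Multiset.count_eq_zero.2 (fun hc => hnmem hc)]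
        simp [Ne.symm hik]

end GenAux

namespace GenAux

section Claims

variable {k h r : ℕ} {a : ℕ → ℤ} {B : Set ℤ}

lemma sum_le_of_legal {X : Multiset ℕ} (hX : Legal k h r X) : X.sum ≤ (k - 1) * h := by
  have := Multiset.sum_le_card_nsmul X (k - 1) (fun x hx => by
    have := hX.2.1 x hx; omega)
  rw [hX.1] at this
  simpa [smul_eq_mul, mul_comm] using this

lemma claimDown (hr : 2 ≤ r) (hrh : r ≤ h) (hhr : h ≤ r + 1) (hrk : r + 2 ≤ k)
    (ha : ∀ i j : ℕ, i < j → j < k → a i < a j)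
    (hBfin : B.Finite) (hB : ∀ X : Multiset ℕ, Legal k h r X → mval a X ∈ B) :
    ∀ n (X : Multiset ℕ), X.sum = n → Legal k h r X →
      X.sum + 1 ≤ (B ∩ Set.Iic (mval a X)).ncard + (Bot h r).sum := by
  intro n
  induction n using Nat.strong_induction_on with
  | _ n ih =>
    intro X hXsum hX
    by_cases hXb : X = Bot h r
    · subst hXb
      have hv : mval a (Bot h r) ∈ B := hB _ (legal_bot hrh (by omega) (by omega))
      have hfin : (B ∩ Set.Iic (mval a (Bot h r))).Finite := hBfin.subset Set.inter_subset_left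
      have hne : (B ∩ Set.Iic (mval a (Bot h r))).Nonempty := ⟨_, hv, Set.mem_Iic.2 (le_refl _)⟩
      have : 0 < (B ∩ Set.Iic (mval a (Bot h r))).ncard := (Set.ncard_pos hfin).2 hne
      omega
    · obtain ⟨p, hp, hp1, hleg⟩ := exists_down_move hr hrh hhr hrk hX hXb
      have hsum' : (repl X p (p - 1)).sum + 1 = X.sum := by
        have := sum_repl hp (p - 1)
        omega
      have hvlt : mval a (repl X p (p - 1)) < mval a X := by
        have h1 := mval_repl a hp (p - 1)
        have hak : a (p - 1) < a p := ha (p - 1) p (by omega) (hX.2.1 p hp)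
        omega
      have hIH := ih (repl X p (p - 1)).sum (by omega) _ rfl hleg
      have hvX : mval a X ∈ B := hB X hX
      have hsub : insert (mval a X) (B ∩ Set.Iic (mval a (repl X p (p - 1))))
          ⊆ B ∩ Set.Iic (mval a X) := by
        intro x hx
        rcases Set.mem_insert_iff.1 hx with rfl | hx
        · exact ⟨hvX, Set.mem_Iic.2 (le_refl _)⟩
        · exact ⟨hx.1, Set.mem_Iic.2 (le_trans (Set.mem_Iic.1 hx.2) (le_of_lt hvlt))⟩
      have hnotmem : mval a X ∉ B ∩ Set.Iic (mval a (repl X p (p - 1))) :=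
        fun hc => absurd (Set.mem_Iic.1 hc.2) (not_le.2 hvlt)
      have hfin1 : (B ∩ Set.Iic (mval a (repl X p (p - 1)))).Finite :=
        hBfin.subset Set.inter_subset_left
      have hfin2 : (B ∩ Set.Iic (mval a X)).Finite := hBfin.subset Set.inter_subset_left
      have hstep : (B ∩ Set.Iic (mval a (repl X p (p - 1)))).ncard + 1
          ≤ (B ∩ Set.Iic (mval a X)).ncard := by
        rw [← Set.ncard_insert_of_notMem hnotmem hfin1]
        exact Set.ncard_le_ncard hsub hfin2
      omega

lemma claimUp (hr : 2 ≤ r) (hrh : r ≤ h) (hhr : h ≤ r + 1) (hrk : r + 2 ≤ k)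
    (ha : ∀ i j : ℕ, i < j → j < k → a i < a j)
    (hBfin : B.Finite) (hB : ∀ X : Multiset ℕ, Legal k h r X → mval a X ∈ B) :
    ∀ n (X : Multiset ℕ), (k - 1) * h = X.sum + n → Legal k h r X →
      (Top k h r).sum + 1 ≤ (B ∩ Set.Ici (mval a X)).ncard + X.sum := by
  intro n
  induction n using Nat.strong_induction_on with
  | _ n ih =>
    intro X hXsum hX
    by_cases hXb : X = Top k h r
    · subst hXb
      have hv : mval a (Top k h r) ∈ B := hB _ (legal_top hrh (by omega) (by omega))
      have hfin : (B ∩ Set.Ici (mval a (Top k h r))).Finite := hBfin.subset Set.inter_subset_left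
      have hne : (B ∩ Set.Ici (mval a (Top k h r))).Nonempty := ⟨_, hv, Set.mem_Ici.2 (le_refl _)⟩
      have : 0 < (B ∩ Set.Ici (mval a (Top k h r))).ncard := (Set.ncard_pos hfin).2 hne
      omega
    · obtain ⟨p, hp, hp1, hleg⟩ := exists_up_move hr hrh hhr hrk hX hXb
      have hsum' : (repl X p (p + 1)).sum = X.sum + 1 := by
        have := sum_repl hp (p + 1)
        omega
      have hbnd : (repl X p (p + 1)).sum ≤ (k - 1) * h := sum_le_of_legal hleg
      have hvlt : mval a X < mval a (repl X p (p + 1)) := by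
        have h1 := mval_repl a hp (p + 1)
        have hak : a p < a (p + 1) := ha p (p + 1) (by omega) hp1
        omega
      have hIH := ih (n - 1) (by omega) _ (by omega) hleg
      have hvX : mval a X ∈ B := hB X hX
      have hsub : insert (mval a X) (B ∩ Set.Ici (mval a (repl X p (p + 1))))
          ⊆ B ∩ Set.Ici (mval a X) := by
        intro x hx
        rcases Set.mem_insert_iff.1 hx with rfl | hx
        · exact ⟨hvX, Set.mem_Ici.2 (le_refl _)⟩
        · exact ⟨hx.1, Set.mem_Ici.2 (le_trans (le_of_lt hvlt) (Set.mem_Ici.1 hx.2))⟩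
      have hnotmem : mval a X ∉ B ∩ Set.Ici (mval a (repl X p (p + 1))) :=
        fun hc => absurd (Set.mem_Iic.1 hc.2) (not_le.2 hvlt)
      have hfin1 : (B ∩ Set.Ici (mval a (repl X p (p + 1)))).Finite :=
        hBfin.subset Set.inter_subset_left
      have hfin2 : (B ∩ Set.Ici (mval a X)).Finite := hBfin.subset Set.inter_subset_left
      have hstep : (B ∩ Set.Ici (mval a (repl X p (p + 1)))).ncard + 1
          ≤ (B ∩ Set.Ici (mval a X)).ncard := by
        rw [← Set.ncard_insert_of_notMem hnotmem hfin1]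
        exact Set.ncard_le_ncard hsub hfin2
      omega

lemma pinch (hr : 2 ≤ r) (hrh : r ≤ h) (hhr : h ≤ r + 1) (hrk : r + 2 ≤ k)
    (ha : ∀ i j : ℕ, i < j → j < k → a i < a j)
    (hBfin : B.Finite) (hB : ∀ X : Multiset ℕ, Legal k h r X → mval a X ∈ B)
    (hNB : B.ncard + r * (r - 1) = h * (k - 1) + 1) :
    ∀ X : Multiset ℕ, Legal k h r X →
      (B ∩ Set.Iic (mval a X)).ncard + (Bot h r).sum = X.sum + 1 := by
  intro X hX
  have h1 := claimDown hr hrh hhr hrk ha hBfin hB X.sum X rfl hX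
  have hbnd : X.sum ≤ (k - 1) * h := sum_le_of_legal hX
  have h2 := claimUp hr hrh hhr hrk ha hBfin hB ((k - 1) * h - X.sum) X (by omega) hX
  have hv : mval a X ∈ B := hB X hX
  have hu : (B ∩ Set.Iic (mval a X)) ∪ (B ∩ Set.Ici (mval a X)) = B := by
    ext x
    constructor
    · rintro (hx | hx) <;> exact hx.1
    · intro hx
      rcases le_total x (mval a X) with hle | hle
      · exact Or.inl ⟨hx, Set.mem_Iic.2 hle⟩
      · exact Or.inr ⟨hx, Set.mem_Ici.2 hle⟩
  have hi : (B ∩ Set.Iic (mval a X)) ∩ (B ∩ Set.Ici (mval a X)) = {mval a X} := by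
    ext x
    constructor
    · rintro ⟨⟨-, hle⟩, ⟨-, hge⟩⟩
      exact le_antisymm (Set.mem_Iic.1 hle) (Set.mem_Ici.1 hge)
    · rintro rfl
      exact ⟨⟨hv, Set.mem_Iic.2 (le_refl _)⟩, ⟨hv, Set.mem_Ici.2 (le_refl _)⟩⟩
  have hsplit := Set.ncard_union_add_ncard_inter (B ∩ Set.Iic (mval a X))
    (B ∩ Set.Ici (mval a X)) (hBfin.subset Set.inter_subset_left)
    (hBfin.subset Set.inter_subset_left)
  rw [hu, hi, Set.ncard_singleton] at hsplit
  have hst := sum_top_eq hr hrh hrk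
  have hmul : (k - 1) * h = h * (k - 1) := mul_comm _ _
  omega

lemma key_diff (hr : 2 ≤ r) (hrh : r ≤ h) (hhr : h ≤ r + 1) (hrk : r + 2 ≤ k)
    (ha : ∀ i j : ℕ, i < j → j < k → a i < a j)
    (hBfin : B.Finite) (hB : ∀ X : Multiset ℕ, Legal k h r X → mval a X ∈ B)
    (hNB : B.ncard + r * (r - 1) = h * (k - 1) + 1)
    {X : Multiset ℕ} (hX : Legal k h r X) {p q : ℕ} (hpX : p ∈ X) (hqX : q ∈ X)
    (hpk : p + 1 < k) (hqk : q + 1 < k)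
    (hlegp : Legal k h r (repl X p (p + 1))) (hlegq : Legal k h r (repl X q (q + 1))) :
    a (p + 1) - a p = a (q + 1) - a q := by
  have e1 := pinch hr hrh hhr hrk ha hBfin hB hNB _ hlegp
  have e2 := pinch hr hrh hhr hrk ha hBfin hB hNB _ hlegq
  have hsp := sum_repl hpX (p + 1)
  have hsq := sum_repl hqX (q + 1)
  have hceq : (B ∩ Set.Iic (mval a (repl X p (p + 1)))).ncard
      = (B ∩ Set.Iic (mval a (repl X q (q + 1)))).ncard := by omega
  have hv1 := mval_repl a hpX (p + 1)
  have hv2 := mval_repl a hqX (q + 1)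
  have hmono : ∀ u v : ℤ, u < v → v ∈ B →
      (B ∩ Set.Iic u).ncard < (B ∩ Set.Iic v).ncard := by
    intro u v huv hvB
    have hsub : insert v (B ∩ Set.Iic u) ⊆ B ∩ Set.Iic v := by
      intro x hx
      rcases Set.mem_insert_iff.1 hx with rfl | hx
      · exact ⟨hvB, Set.mem_Iic.2 (le_refl _)⟩
      · exact ⟨hx.1, Set.mem_Iic.2 (le_trans (Set.mem_Iic.1 hx.2) (le_of_lt huv))⟩
    have hnm : v ∉ B ∩ Set.Iic u := fun hc => absurd (Set.mem_Iic.1 hc.2) (not_le.2 huv)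
    calc (B ∩ Set.Iic u).ncard < (insert v (B ∩ Set.Iic u)).ncard := by
          rw [Set.ncard_insert_of_notMem hnm (hBfin.subset Set.inter_subset_left)]
          omega
      _ ≤ _ := Set.ncard_le_ncard hsub (hBfin.subset Set.inter_subset_left)
  rcases lt_trichotomy (mval a (repl X p (p + 1))) (mval a (repl X q (q + 1))) with hlt | heq | hgt
  · have := hmono _ _ hlt (hB _ hlegq)
    omega
  · omega
  · have := hmono _ _ hgt (hB _ hlegp)
    omega

end Claims
end GenAux

open GenAux in
theorem genSumset_inverse_int_small_h (k r : ℕ) (hk : 5 ≤ k) (hr : 2 ≤ r) (hrk : r ≤ k - 2)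
    (h : ℕ) (hh : h = r ∨ h = r + 1) (hh2 : 2 ≤ h) (A : Finset ℤ) (hA : A.card = k)
    (hcard : (genSumset h r A).ncard = h * (k - 1) - r * (r - 1) + 1) :
    ∃ a d : ℤ, 1 ≤ d ∧
      A = Finset.image (fun i : ℕ => a + (i : ℤ) * d) (Finset.range k) := by
  have hrh : r ≤ h := by omega
  have hhr : h ≤ r + 1 := by omega
  have hrk' : r + 2 ≤ k := by omega
  -- the increasing enumeration of A
  set a : ℕ → ℤ := fun i => if hi : i < k then A.orderEmbOfFin hA ⟨i, hi⟩ else 0 with hadef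
  have ha : ∀ i j : ℕ, i < j → j < k → a i < a j := by
    intro i j hij hjk
    have hik : i < k := lt_trans hij hjk
    simp only [hadef, dif_pos hik, dif_pos hjk]
    exact (A.orderEmbOfFin hA).strictMono (show (⟨i, hik⟩ : Fin k) < ⟨j, hjk⟩ from hij)
  have haA : ∀ i, i < k → a i ∈ A := by
    intro i hi
    simp only [hadef, dif_pos hi]
    exact A.orderEmbOfFin_mem hA ⟨i, hi⟩
  have hainj : Set.InjOn a (Finset.range k : Set ℕ) := by
    intro i hi j hj hij
    simp only [Finset.coe_range, Set.mem_Iio] at hi hj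
    by_contra hne
    rcases lt_or_gt_of_ne hne with hlt | hlt
    · exact absurd hij (ne_of_lt (ha i j hlt hj))
    · exact absurd hij.symm (ne_of_lt (ha j i hlt hi))
  have hAimg : A = (Finset.range k).image a := by
    have hsub : (Finset.range k).image a ⊆ A := by
      intro x hx
      obtain ⟨i, hi, rfl⟩ := Finset.mem_image.1 hx
      exact haA i (Finset.mem_range.1 hi)
    have hcardim : ((Finset.range k).image a).card = k := by
      rw [Finset.card_image_of_injOn (by simpa using hainj)]
      simp
    exact (Finset.eq_of_subset_of_card_le hsub (by omega)).symm
  set B : Set ℤ := genSumset h r A with hBdef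
  -- every legal configuration gives an element of B
  have hB : ∀ X : Multiset ℕ, Legal k h r X → mval a X ∈ B := by
    intro X ⟨hc, hlt, htc⟩
    refine ⟨X.map a, ?_, ?_, ?_, rfl⟩
    · rw [Multiset.toFinset_map]
      intro x hx
      obtain ⟨i, hi, rfl⟩ := Finset.mem_image.1 hx
      exact haA i (hlt i (Multiset.mem_toFinset.1 hi))
    · rw [Multiset.card_map, hc]
    · rw [Multiset.toFinset_map]
      rw [Finset.card_image_of_injOn (fun x hx y hy hxy =>
        hainj (by simpa using hlt x (Multiset.mem_toFinset.1 hx))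
          (by simpa using hlt y (Multiset.mem_toFinset.1 hy)) hxy)]
      exact htc
  -- B is finite
  have hAne : A.Nonempty := Finset.card_pos.1 (by omega)
  have hBfin : B.Finite := by
    apply (Set.finite_Icc ((h : ℤ) * A.min' hAne) ((h : ℤ) * A.max' hAne)).subset
    rintro x ⟨s, hsub, hcards, -, rfl⟩
    constructor
    · have := Multiset.card_nsmul_le_sum (s := s) (a := A.min' hAne) (fun y hy =>
        A.min'_le y (hsub (Multiset.mem_toFinset.2 hy)))
      rwa [hcards, nsmul_eq_mul] at this
    · have := Multiset.sum_le_card_nsmul s (A.max' hAne) (fun y hy =>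
        A.le_max' y (hsub (Multiset.mem_toFinset.2 hy)))
      rwa [hcards, nsmul_eq_mul] at this
  have hNB : B.ncard + r * (r - 1) = h * (k - 1) + 1 := by
    have := mul_le_mul_nat hrh hrk'
    omega
  -- equal gaps
  have Epair : ∀ i j : ℕ, i + 2 ≤ j → j + 1 < k →
      a (i + 1) - a i = a (j + 1) - a j := by
    intro i j hij hjk
    have hik : i + 1 < k := by omega
    set U : Finset ℕ := Finset.range k \ {i, i + 1, j, j + 1} with hU
    have hUcard : r - 2 ≤ U.card := by
      have h4 : ({i, i + 1, j, j + 1} : Finset ℕ).card ≤ 4 := by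
        apply le_trans (Finset.card_insert_le _ _)
        apply Nat.succ_le_succ
        apply le_trans (Finset.card_insert_le _ _)
        apply Nat.succ_le_succ
        exact Finset.card_insert_le _ _
      have hsub4 : ({i, i + 1, j, j + 1} : Finset ℕ) ⊆ Finset.range k := by
        intro x hx
        simp only [Finset.mem_insert, Finset.mem_singleton] at hx
        rw [Finset.mem_range]
        rcases hx with rfl | rfl | rfl | rfl <;> omega
      have := Finset.card_sdiff_of_subset hsub4
      rw [← hU] at this
      simp only [Finset.card_range] at this
      omega
    obtain ⟨T, hTU, hTcard⟩ := Finset.exists_subset_card_eq hUcard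
    have hT : ∀ x ∈ T, x < k ∧ x ≠ i ∧ x ≠ i + 1 ∧ x ≠ j ∧ x ≠ j + 1 := by
      intro x hx
      have hxU := hTU hx
      simp only [hU, Finset.mem_sdiff, Finset.mem_range, Finset.mem_insert,
        Finset.mem_singleton] at hxU
      tauto
    have hij' : i ≠ j := by omega
    have hiT : i ∉ T := fun hc => (hT i hc).2.1 rfl
    have hjT : j ∉ T := fun hc => (hT j hc).2.2.2.1 rfl
    set S : Finset ℕ := insert i (insert j T) with hS
    have hiS : i ∈ S := Finset.mem_insert_self _ _
    have hjS : j ∈ S := Finset.mem_insert_of_mem (Finset.mem_insert_self _ _)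
    have hScard : S.card = r := by
      rw [hS, Finset.card_insert_of_notMem (by
          simp only [Finset.mem_insert]
          push_neg
          exact ⟨hij', hiT⟩),
        Finset.card_insert_of_notMem hjT, hTcard]
      omega
    have hSlt : ∀ x ∈ S, x < k := by
      intro x hx
      rcases Finset.mem_insert.1 hx with rfl | hx
      · omega
      · rcases Finset.mem_insert.1 hx with rfl | hx
        · omega
        · exact (hT x hx).1
    set X : Multiset ℕ := S.val + Multiset.replicate (h - r) i with hX
    have hmemX : ∀ x, x ∈ X → x ∈ S := by
      intro x hx
      rcases Multiset.mem_add.1 hx with hx | hx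
      · exact hx
      · rw [Multiset.eq_of_mem_replicate hx]
        exact hiS
    have hiX : i ∈ X := Multiset.mem_add.2 (Or.inl hiS)
    have hjX : j ∈ X := Multiset.mem_add.2 (Or.inl hjS)
    have hi1X : i + 1 ∉ X := by
      intro hc
      have := Finset.mem_insert.1 (hmemX _ hc)
      rcases this with hc2 | hc2
      · omega
      · rcases Finset.mem_insert.1 hc2 with hc3 | hc3
        · omega
        · exact (hT _ hc3).2.2.1 rfl
    have hj1X : j + 1 ∉ X := by
      intro hc
      have := Finset.mem_insert.1 (hmemX _ hc)
      rcases this with hc2 | hc2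
      · omega
      · rcases Finset.mem_insert.1 hc2 with hc3 | hc3
        · omega
        · exact (hT _ hc3).2.2.2.2 rfl
    have hXlt : ∀ x ∈ X, x < k := fun x hx => hSlt x (hmemX x hx)
    have hXcard : Multiset.card X = h := by
      rw [hX, Multiset.card_add, Multiset.card_replicate]
      have : Multiset.card S.val = r := hScard
      omega
    have hXtc : r ≤ X.toFinset.card := by
      have hsub : S ⊆ X.toFinset := fun x hx =>
        Multiset.mem_toFinset.2 (Multiset.mem_add.2 (Or.inl hx))
      calc r = S.card := hScard.symm
        _ ≤ _ := Finset.card_le_card hsub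
    have hXleg : Legal k h r X := ⟨hXcard, hXlt, hXtc⟩
    have hlegp : Legal k h r (repl X i (i + 1)) :=
      ⟨(card_repl hiX _).trans hXcard, mem_repl_lt hXlt hik,
        le_trans hXtc (tc_repl_fresh hiX hi1X)⟩
    have hlegq : Legal k h r (repl X j (j + 1)) :=
      ⟨(card_repl hjX _).trans hXcard, mem_repl_lt hXlt hjk,
        le_trans hXtc (tc_repl_fresh hjX hj1X)⟩
    exact key_diff hr hrh hhr hrk' ha hBfin hB hNB hXleg hiX hjX hik hjk hlegp hlegq
  -- conclude: all gaps equal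
  set d : ℤ := a 1 - a 0 with hd
  have hd1 : 1 ≤ d := by
    have := ha 0 1 (by omega) (by omega)
    omega
  have hdall : ∀ i : ℕ, i + 1 < k → a (i + 1) - a i = d := by
    intro i hik
    rcases Nat.lt_or_ge i 1 with hi | hi
    · interval_cases i
      rfl
    · rcases Nat.lt_or_ge i 2 with hi2 | hi2
      · interval_cases i
        show a 2 - a 1 = d
        have e1 : a 2 - a 1 = a 4 - a 3 := Epair 1 3 (by omega) (by omega)
        have e2 : a 1 - a 0 = a 4 - a 3 := Epair 0 3 (by omega) (by omega)
        omega
      · exact (Epair 0 i (by omega) hik).symm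
  have hval : ∀ i : ℕ, i < k → a i = a 0 + (i : ℤ) * d := by
    intro i
    induction i with
    | zero => intro _; simp
    | succ n ihn =>
      intro hnk
      have h1 := ihn (by omega)
      have h2 := hdall n hnk
      push_cast
      rw [show a (n + 1) = a n + d by omega, h1]
      ring
  refine ⟨a 0, d, hd1, ?_⟩
  rw [hAimg]
  apply Finset.image_congr
  intro i hi
  simp only [Finset.coe_range, Set.mem_Iio] at hi
  exact hval i hi
end

section
/- Let $m, k$ be positive integers with $k \leq m$, let $d$ be a positive divisor of $m$, and let $v \in \{1, \ldots, d\}$ be the positive remainder of $k$ modulo $d$. Let $A_d(m,k) \subseteq \mathbb{Z}/m\mathbb{Z}$ be the $k$-element set $A_d(m,k) = \bigcup_{i=0}^{u-1}(i + H) \cup \{u + j\cdot(m/d) : j = 0, 1, \ldots, v-1\}$, where $H = \{0, m/d, \ldots, (d-1)(m/d)\}$ is the subgroup of $\mathbb{Z}/m\mathbb{Z}$ of order $d$ and $k = ud + v$. Then for every integer $h \geq 2$, the $h$-fold sumset satisfies $|hA_d(m,k)| = \min\{m,\; (h\lceil k/d\rceil - h + 1)d,\; hk - h + 1\}$. -/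
open Pointwise

/-- Bajnok's set `A_d(m,k)`: the union of the cosets `i + H`, `0 ≤ i ≤ u-1`, of the
order-`d` subgroup `H = {0, m/d, …, (d-1)(m/d)}` of `ℤ/mℤ`, together with the `v` elements
`u + j·(m/d)`, `0 ≤ j ≤ v-1`, where `k = ud + v` with `1 ≤ v ≤ d`. -/
def bajnokSet (m d u v : ℕ) : Finset (ZMod m) :=
  ((Finset.range u ×ˢ Finset.range d) ∪ ({u} ×ˢ Finset.range v)).image
    (fun q : ℕ × ℕ => (q.1 : ZMod m) + (q.2 : ZMod m) * ((m / d : ℕ) : ZMod m))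

/-- The defining map of `bajnokSet`, as an additive monoid homomorphism. -/
def FF (m d : ℕ) : ℕ × ℕ →+ ZMod m where
  toFun q := (q.1 : ZMod m) + (q.2 : ZMod m) * ((m / d : ℕ) : ZMod m)
  map_zero' := by simp
  map_add' p q := by simp only [Prod.fst_add, Prod.snd_add]; push_cast; ring

lemma FF_apply (m d : ℕ) (q : ℕ × ℕ) :
    FF m d q = (q.1 : ZMod m) + (q.2 : ZMod m) * ((m/d : ℕ) : ZMod m) := rfl

lemma bajnokSet_eq (m d u v : ℕ) :
    bajnokSet m d u v =
      ((Finset.range u ×ˢ Finset.range d) ∪ ({u} ×ˢ Finset.range v)).image (FF m d) := rfl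

lemma FF_mod (m d i j : ℕ) (hd : d ∣ m) : FF m d (i, j % d) = FF m d (i, j) := by
  simp only [FF_apply]
  have h1 : j = d * (j / d) + j % d := (Nat.div_add_mod j d).symm
  have h2 : ((m/d : ℕ) : ZMod m) * (d : ZMod m) = 0 := by
    rw [mul_comm, ← Nat.cast_mul, Nat.mul_div_cancel' hd, ZMod.natCast_self]
  nth_rewrite 2 [h1]
  push_cast
  ring_nf
  rw [h2, zero_mul, add_zero]

lemma multiset_lift {α β : Type*} [DecidableEq α] [DecidableEq β] (f : α → β) (S : Finset α)
    (s : Multiset β) (hs : s.toFinset ⊆ S.image f) :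
    ∃ t : Multiset α, (∀ p ∈ t, p ∈ S) ∧ t.map f = s := by
  induction s using Multiset.induction with
  | empty => exact ⟨0, by simp, by simp⟩
  | cons b s ih =>
    have hb : b ∈ S.image f := hs (by simp)
    obtain ⟨a, ha, rfl⟩ := Finset.mem_image.mp hb
    obtain ⟨t, ht1, ht2⟩ := ih (fun x hx =>
      hs (by simp only [Multiset.toFinset_cons, Finset.mem_insert]; right; exact hx))
    refine ⟨a ::ₘ t, ?_, by simp [ht2]⟩
    intro p hp
    rcases Multiset.mem_cons.mp hp with rfl | hp
    · exact ha
    · exact ht1 p hp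

lemma bound_lemma (u v d : ℕ) (t : Multiset (ℕ × ℕ))
    (ht : ∀ p ∈ t, (p.1 < u ∧ p.2 < d) ∨ (p.1 = u ∧ p.2 < v)) :
    t.sum.1 ≤ Multiset.card t * u ∧
      (t.sum.1 = Multiset.card t * u → t.sum.2 ≤ Multiset.card t * (v - 1)) := by
  induction t using Multiset.induction with
  | empty => simp
  | cons p t ih =>
    obtain ⟨h1, h2⟩ := ih (fun q hq => ht q (Multiset.mem_cons_of_mem hq))
    have hp := ht p (Multiset.mem_cons_self p t)
    simp only [Multiset.sum_cons, Multiset.card_cons, Prod.fst_add, Prod.snd_add]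
    have e : (Multiset.card t + 1) * u = Multiset.card t * u + u := by ring
    have e2 : (Multiset.card t + 1) * (v-1) = Multiset.card t * (v-1) + (v-1) := by ring
    constructor
    · omega
    · intro he
      rcases hp with ⟨h3, _⟩ | ⟨h3, h4⟩
      · omega
      · have h5 : t.sum.1 = Multiset.card t * u := by omega
        have := h2 h5
        omega

lemma mem_T {u v d : ℕ} (p : ℕ × ℕ) :
    p ∈ (Finset.range u ×ˢ Finset.range d) ∪ ({u} ×ˢ Finset.range v) ↔
      (p.1 < u ∧ p.2 < d) ∨ (p.1 = u ∧ p.2 < v) := by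
  simp only [Finset.mem_union, Finset.mem_product, Finset.mem_range, Finset.mem_singleton]

lemma hfold_bajnok (m d u v h : ℕ) (hd : d ∣ m) (hd1 : 1 ≤ d) (hv1 : 1 ≤ v) (hh : 1 ≤ h) :
    hfoldSumset h (bajnokSet m d u v) = ↑(bajnokSet m d (h*u) (h*(v-1)+1)) := by
  ext x
  simp only [hfoldSumset, Set.mem_setOf_eq, Finset.mem_coe]
  constructor
  · rintro ⟨s, hsub, hcard, rfl⟩
    rw [bajnokSet_eq] at hsub
    obtain ⟨t, htS, rfl⟩ := multiset_lift _ _ s hsub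
    have hcard' : Multiset.card t = h := by simpa using hcard
    have hsum : (t.map (FF m d)).sum = FF m d t.sum := (map_multiset_sum (FF m d) t).symm
    have htS' : ∀ p ∈ t, (p.1 < u ∧ p.2 < d) ∨ (p.1 = u ∧ p.2 < v) :=
      fun p hp => (mem_T p).mp (htS p hp)
    obtain ⟨hb1, hb2⟩ := bound_lemma u v d t htS'
    rw [hcard'] at hb1 hb2
    rw [bajnokSet_eq, Finset.mem_image, hsum]
    by_cases hI : t.sum.1 = h * u
    · refine ⟨(h*u, t.sum.2), ?_, ?_⟩
      · rw [mem_T]; right; exact ⟨rfl, by have := hb2 hI; omega⟩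
      · rw [← hI]
    · refine ⟨(t.sum.1, t.sum.2 % d), ?_, ?_⟩
      · rw [mem_T]; left; exact ⟨by omega, Nat.mod_lt _ (by omega)⟩
      · rw [FF_mod _ _ _ _ hd]
  · intro hx
    rw [bajnokSet_eq, Finset.mem_image] at hx
    obtain ⟨⟨I, J⟩, hIJ, rfl⟩ := hx
    rw [mem_T] at hIJ
    rcases hIJ with ⟨hI, hJ⟩ | ⟨hI, hJ⟩
    · -- I < h*u, J < d
      have hu1 : 1 ≤ u := by
        rcases Nat.eq_zero_or_pos u with h0 | h0
        · subst h0; simp at hI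
        · exact h0
      set t0 := I / u with ht0def
      have ht0 : t0 < h := (Nat.div_lt_iff_lt_mul (by omega)).mpr (by omega)
      set s0 : Multiset (ℕ × ℕ) :=
        Multiset.replicate t0 (u, 0) + Multiset.replicate (h-1-t0) (0, 0) + {(I % u, J)} with hs0
      refine ⟨s0.map (FF m d), ?_, ?_, ?_⟩
      · intro y hy
        rw [Multiset.mem_toFinset, Multiset.mem_map] at hy
        obtain ⟨p, hp, rfl⟩ := hy
        rw [bajnokSet_eq, Finset.mem_image]
        refine ⟨p, ?_, rfl⟩
        rw [mem_T]
        simp only [hs0, Multiset.mem_add, Multiset.mem_replicate, Multiset.mem_singleton] at hp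
        rcases hp with (⟨-, rfl⟩ | ⟨-, rfl⟩) | rfl
        · right; exact ⟨rfl, by omega⟩
        · left; exact ⟨by omega, by omega⟩
        · left; exact ⟨Nat.mod_lt _ (by omega), hJ⟩
      · simp [hs0, Multiset.card_replicate]; omega
      · rw [← map_multiset_sum]
        have : s0.sum = (t0 * u + I % u, J) := by
          simp [hs0, Multiset.sum_replicate, Prod.smul_mk, smul_eq_mul]
        rw [this]
        congr 1
        rw [Prod.mk.injEq]
        have h3 : t0 * u = u * (I / u) := by rw [ht0def]; exact mul_comm _ _
        have h4 := Nat.div_add_mod I u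
        exact ⟨by omega, rfl⟩
    · -- I = h*u, J < h*(v-1)+1
      obtain ⟨t0, r, ht0, hr, hsum⟩ : ∃ t0 r, t0 ≤ h - 1 ∧ r < v ∧ t0 * (v-1) + r = J := by
        by_cases hv2 : v = 1
        · subst hv2; simp at hJ; exact ⟨0, 0, by omega, by omega, by omega⟩
        · have hw1 : 1 ≤ v - 1 := by omega
          set w := v - 1 with hwdef
          rcases le_or_gt h (J / w) with hc | hc
          · have h1 : (h-1) * w ≤ J := by
              calc (h-1) * w ≤ (J / w) * w := Nat.mul_le_mul_right w (by omega)
              _ ≤ J := Nat.div_mul_le_self J w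
            have h2 : h * w = (h-1) * w + w := by
              have : h - 1 + 1 = h := by omega
              calc h * w = (h - 1 + 1) * w := by rw [this]
              _ = (h-1)*w + w := by ring
            exact ⟨h - 1, J - (h-1)*w, le_refl _, by omega, by omega⟩
          · have h1 := Nat.div_add_mod J w
            have h2 : J % w < w := Nat.mod_lt _ (by omega)
            have h3 : (J/w)*w = w*(J/w) := mul_comm _ _
            exact ⟨J / w, J % w, by omega, by omega, by omega⟩
      set s0 : Multiset (ℕ × ℕ) :=
        Multiset.replicate t0 (u, v-1) + Multiset.replicate (h-1-t0) (u, 0) + {(u, r)} with hs0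
      refine ⟨s0.map (FF m d), ?_, ?_, ?_⟩
      · intro y hy
        rw [Multiset.mem_toFinset, Multiset.mem_map] at hy
        obtain ⟨p, hp, rfl⟩ := hy
        rw [bajnokSet_eq, Finset.mem_image]
        refine ⟨p, ?_, rfl⟩
        rw [mem_T]
        simp only [hs0, Multiset.mem_add, Multiset.mem_replicate, Multiset.mem_singleton] at hp
        rcases hp with (⟨-, rfl⟩ | ⟨-, rfl⟩) | rfl
        · right; exact ⟨rfl, by omega⟩
        · right; exact ⟨rfl, by omega⟩
        · right; exact ⟨rfl, hr⟩
      · simp [hs0, Multiset.card_replicate]; omega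
      · rw [← map_multiset_sum]
        have e1 : s0.sum = (t0 * u + (h-1-t0) * u + u, t0 * (v-1) + r) := by
          simp [hs0, Multiset.sum_replicate, Prod.smul_mk, smul_eq_mul]
        rw [e1]
        congr 1
        rw [Prod.mk.injEq]
        have hI' : I = h * u := hI
        constructor
        · rw [hI']
          have e2 : t0 + (h-1-t0) + 1 = h := by omega
          calc t0 * u + (h-1-t0) * u + u = (t0 + (h-1-t0) + 1) * u := by ring
          _ = h * u := by rw [e2]
        · exact hsum

lemma card_bajnok (m d u' v' : ℕ) (hm : 1 ≤ m) (hd : d ∣ m) (hd1 : 1 ≤ d) (hv : 1 ≤ v') :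
    (bajnokSet m d u' v').card = min m (u' * d + min d v') := by
  haveI : NeZero m := ⟨by omega⟩
  obtain ⟨g, rfl⟩ := hd
  have hg1 : 1 ≤ g := by
    rcases Nat.eq_zero_or_pos g with rfl | h0
    · simp at hm
    · exact h0
  have hmd : d * g / d = g := Nat.mul_div_cancel_left g (by omega)
  have hval : ∀ i j : ℕ, i < g → j < d → (FF (d*g) d (i, j)).val = i + j * g := by
    intro i j hi hj
    have h1 : (j+1) * g ≤ d * g := Nat.mul_le_mul_right g (by omega)
    have h2 : (j+1) * g = j * g + g := by ring
    have hlt : i + j * g < d * g := by omega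
    have he : FF (d*g) d (i, j) = ((i + j * g : ℕ) : ZMod (d*g)) := by
      simp only [FF_apply, hmd]; push_cast; ring
    rw [he, ZMod.val_cast_of_lt hlt]
  have hinj : ∀ i j i' j' : ℕ, i < g → j < d → i' < g → j' < d →
      FF (d*g) d (i, j) = FF (d*g) d (i', j') → i = i' ∧ j = j' := by
    intro i j i' j' hi hj hi' hj' heq
    have h1 : i + j * g = i' + j' * g := by
      rw [← hval i j hi hj, ← hval i' j' hi' hj', heq]
    have h2 : (i + j * g) % g = (i' + j' * g) % g := by rw [h1]
    rw [Nat.add_mul_mod_self_right, Nat.add_mul_mod_self_right,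
      Nat.mod_eq_of_lt hi, Nat.mod_eq_of_lt hi'] at h2
    subst h2
    have h3 : j * g = j' * g := by omega
    exact ⟨rfl, Nat.eq_of_mul_eq_mul_right (by omega) h3⟩
  rcases le_or_gt g u' with hcase | hcase
  · -- u' ≥ g : full group
    have huniv : bajnokSet (d*g) d u' v' = Finset.univ := by
      apply Finset.eq_univ_of_forall
      intro x
      rw [bajnokSet_eq, Finset.mem_image]
      have hxm : x.val < d * g := ZMod.val_lt x
      have hdiv : x.val / g < d := by rw [Nat.div_lt_iff_lt_mul (by omega)]; omega
      have hmod : x.val % g < g := Nat.mod_lt _ (by omega)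
      refine ⟨(x.val % g, x.val / g), ?_, ?_⟩
      · rw [mem_T]; left; exact ⟨lt_of_lt_of_le hmod hcase, hdiv⟩
      · apply ZMod.val_injective
        rw [hval _ _ hmod hdiv]
        have h4 := Nat.div_add_mod x.val g
        have h5 : (x.val / g) * g = g * (x.val / g) := mul_comm _ _
        omega
    rw [huniv, Finset.card_univ, ZMod.card]
    have h5 : g * d ≤ u' * d := Nat.mul_le_mul_right d hcase
    have h6 : g * d = d * g := mul_comm _ _
    omega
  · -- u' < g
    have himeq : bajnokSet (d*g) d u' v' =
        ((Finset.range u' ×ˢ Finset.range d) ∪ ({u'} ×ˢ Finset.range (min v' d))).image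
          (FF (d*g) d) := by
      rw [bajnokSet_eq]
      apply Finset.Subset.antisymm
      · intro x hx
        rw [Finset.mem_image] at hx ⊢
        obtain ⟨⟨i, j⟩, hij, rfl⟩ := hx
        rw [mem_T] at hij
        rcases hij with ⟨h1, h2⟩ | ⟨h1, h2⟩
        · exact ⟨(i, j), by rw [mem_T]; left; exact ⟨h1, h2⟩, rfl⟩
        · refine ⟨(i, j % d), ?_, ?_⟩
          · rw [mem_T]; right
            refine ⟨h1, ?_⟩
            have := Nat.mod_lt j (show 0 < d by omega)
            have := Nat.mod_le j d
            omega
          · exact FF_mod _ _ _ _ ⟨g, rfl⟩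
      · intro x hx
        rw [Finset.mem_image] at hx ⊢
        obtain ⟨⟨i, j⟩, hij, rfl⟩ := hx
        rw [mem_T] at hij
        refine ⟨(i, j), ?_, rfl⟩
        rw [mem_T]
        rcases hij with ⟨h1, h2⟩ | ⟨h1, h2⟩
        · left; exact ⟨h1, h2⟩
        · right; exact ⟨h1, by omega⟩
    rw [himeq]
    rw [Finset.card_image_of_injOn]
    · rw [Finset.card_union_of_disjoint]
      · rw [Finset.card_product, Finset.card_product, Finset.card_range, Finset.card_range,
          Finset.card_singleton, Finset.card_range, one_mul]
        have h5 : (u'+1) * d ≤ g * d := Nat.mul_le_mul_right d (by omega)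
        have h6 : (u'+1) * d = u' * d + d := by ring
        have h7 : g * d = d * g := mul_comm _ _
        omega
      · rw [Finset.disjoint_left]
        rintro ⟨i, j⟩ hp hq
        simp only [Finset.mem_product, Finset.mem_range, Finset.mem_singleton] at hp hq
        omega
    · rintro ⟨i, j⟩ hp ⟨i', j'⟩ hq heq
      simp only [Finset.coe_union, Finset.coe_product, Finset.coe_singleton, Set.mem_union,
        Set.mem_prod, Set.mem_singleton_iff, Finset.coe_range, Set.mem_Iio] at hp hq
      have hp' : i < g ∧ j < d := by
        rcases hp with ⟨h1, h2⟩ | ⟨h1, h2⟩ <;> omega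
      have hq' : i' < g ∧ j' < d := by
        rcases hq with ⟨h1, h2⟩ | ⟨h1, h2⟩ <;> omega
      have := hinj i j i' j' hp'.1 hp'.2 hq'.1 hq'.2 heq
      simp [this.1, this.2]

theorem hfoldSumset_card_bajnokSet (m k d u v : ℕ)
    (hm : 1 ≤ m) (hk1 : 1 ≤ k) (hkm : k ≤ m) (hd : d ∣ m) (hd1 : 1 ≤ d)
    (hv1 : 1 ≤ v) (hvd : v ≤ d) (hkuv : k = u * d + v) (h : ℕ) (hh : 2 ≤ h) :
    (hfoldSumset h (bajnokSet m d u v)).ncard =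
      min m (min ((h * ((k + d - 1) / d) - h + 1) * d) (h * k - h + 1)) := by
  rw [hfold_bajnok m d u v h hd hd1 hv1 (by omega), Set.ncard_coe_finset,
    card_bajnok m d _ _ hm hd hd1 (by omega)]
  -- arithmetic
  have hquot : (k + d - 1) / d = u + 1 := by
    have e0 : (u+1) * d = u * d + d := by ring
    have e1 : k + d - 1 = (v - 1) + (u + 1) * d := by omega
    rw [e1, Nat.add_mul_div_right _ _ (show 0 < d by omega), Nat.div_eq_of_lt (by omega),
      zero_add]
  rw [hquot]
  have e1 : h * (u + 1) = h * u + h := by ring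
  have e5 : h * (u + 1) - h + 1 = h * u + 1 := by omega
  rw [e5, show (h * u + 1) * d = h * u * d + d from by ring]
  have e3 : h * k = h * u * d + h * v := by rw [hkuv]; ring
  have e4 : h * (v - 1) + h = h * v := by
    have hv' : v - 1 + 1 = v := by omega
    calc h * (v - 1) + h = h * ((v - 1) + 1) := by ring
    _ = h * v := by rw [hv']
  omega
end

section
/- Let $m, k, r$ be positive integers with $2 \leq r \leq k \leq m$, let $d$ be a positive divisor of $m$, and let $v \in \{1, \ldots, d\}$ be the positive remainder of $k$ modulo $d$. Suppose $r \leq v$ and $r < d$. Let $A_d(m,k) \subseteq \mathbb{Z}/m\mathbb{Z}$ be the $k$-element set $A_d(m,k) = \bigcup_{i=0}^{u-1}(i + H) \cup \{u + j\cdot(m/d) : j = 0, 1, \ldots, v-1\}$, where $H = \{0, m/d, \ldots, (d-1)(m/d)\}$ is the subgroup of $\mathbb{Z}/m\mathbb{Z}$ of order $d$ and $k = ud + v$. Then for every integer $h > r$, we have $|h^{(\geq r)}A_d(m,k)| = \min\{m,\; (h\lceil k/d\rceil - h + 1)d,\; h(k-1) - r(r-1) + 1\}$. -/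
open Pointwise

lemma finset_sum_ge' (F : Finset ℕ) : ∑ i ∈ Finset.range F.card, i ≤ ∑ x ∈ F, x := by
  induction F using Finset.strongInduction with
  | _ F ih =>
    rcases F.eq_empty_or_nonempty with rfl | hne
    · simp
    · have hM : F.card - 1 ≤ F.max' hne := by
        have : F ⊆ Finset.range (F.max' hne + 1) := by
          intro x hx
          simp [Nat.lt_succ_iff, Finset.le_max' F x hx]
        have := Finset.card_le_card this
        simp at this; omega
      have hsub : (F.erase (F.max' hne)).card = F.card - 1 :=
        Finset.card_erase_of_mem (F.max'_mem hne)
      have ihe := ih (F.erase (F.max' hne)) (Finset.erase_ssubset (F.max'_mem hne))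
      have hsum : ∑ x ∈ F, x = F.max' hne + ∑ x ∈ F.erase (F.max' hne), x :=
        (Finset.add_sum_erase F _ (F.max'_mem hne)).symm
      have hc : 1 ≤ F.card := Finset.card_pos.2 hne
      rw [hsub] at ihe
      rw [show F.card = F.card - 1 + 1 from by omega, Finset.sum_range_succ]
      omega

lemma finset_sum_ge (F : Finset ℕ) : F.card * (F.card - 1) / 2 ≤ ∑ x ∈ F, x := by
  have := finset_sum_ge' F
  rwa [Finset.sum_range_id] at this

-- multiset sum of f over s is at least finset sum of f over s.toFinset
lemma toFinset_sum_le (s : Multiset ℕ) (f : ℕ → ℕ) :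
    ∑ x ∈ s.toFinset, f x ≤ (s.map f).sum := by
  induction s using Multiset.induction with
  | empty => simp
  | cons a t ih =>
    simp only [Multiset.toFinset_cons, Multiset.map_cons, Multiset.sum_cons]
    by_cases ha : a ∈ t.toFinset
    · rw [Finset.insert_eq_self.2 ha]; omega
    · rw [Finset.sum_insert ha]; omega



lemma tri_mono {a b : ℕ} (hab : a ≤ b) : a * (a - 1) / 2 ≤ b * (b - 1) / 2 :=
  Nat.div_le_div_right (Nat.mul_le_mul hab (by omega))

lemma L1_lb {rr T : ℕ} (s : Multiset ℕ)
    (hcd : rr ≤ s.toFinset.card) (hsum : s.sum = T) :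
    rr * (rr - 1) / 2 ≤ T := by
  have h1 : ∑ x ∈ s.toFinset, x ≤ (s.map id).sum := toFinset_sum_le s id
  rw [Multiset.map_id] at h1
  have h2 := finset_sum_ge s.toFinset
  have := tri_mono hcd
  omega

lemma L1_ub {w hh rr T : ℕ} (s : Multiset ℕ) (hw : ∀ x ∈ s, x < w)
    (hcard : Multiset.card s = hh) (hcd : rr ≤ s.toFinset.card) (hsum : s.sum = T) :
    T + rr * (rr - 1) / 2 ≤ hh * (w - 1) := by
  have key : T + (s.map (fun x => w - 1 - x)).sum = hh * (w - 1) := by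
    have h1 : (s.map (fun x => x + (w - 1 - x))).sum
        = (s.map id).sum + (s.map (fun x => w - 1 - x)).sum := by
      rw [← Multiset.sum_map_add]; rfl
    have h2 : (s.map (fun x => x + (w - 1 - x))).sum = (s.map (fun _ => w - 1)).sum := by
      congr 1
      apply Multiset.map_congr rfl
      intro x hx
      have := hw x hx
      omega
    rw [h2] at h1
    simp [Multiset.map_id, hsum, Multiset.map_const', hcard] at h1 ⊢
    omega
  have h3 : ∑ x ∈ s.toFinset, (w - 1 - x) ≤ (s.map (fun x => w - 1 - x)).sum :=
    toFinset_sum_le s _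
  have hinj : Set.InjOn (fun x => w - 1 - x) s.toFinset := by
    intro x hx y hy hxy
    have hx' := hw x (Multiset.mem_toFinset.1 hx)
    have hy' := hw y (Multiset.mem_toFinset.1 hy)
    simp only at hxy
    omega
  have h4 : ∑ x ∈ s.toFinset, (w - 1 - x)
      = ∑ y ∈ s.toFinset.image (fun x => w - 1 - x), y :=
    (Finset.sum_image (f := id) (fun x hx y hy => hinj hx hy)).symm
  have h5 := finset_sum_ge (s.toFinset.image (fun x => w - 1 - x))
  rw [Finset.card_image_of_injOn hinj] at h5
  have := tri_mono hcd
  omega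


def okM (w hh rr T : ℕ) : Prop :=
  ∃ s : Multiset ℕ, (∀ x ∈ s, x < w) ∧ Multiset.card s = hh ∧
    rr ≤ s.toFinset.card ∧ s.sum = T

lemma increment {w hh rr T : ℕ} (hrr : 1 ≤ rr) (hok : okM w hh rr T)
    (hlt : T + rr * (rr - 1) / 2 < hh * (w - 1)) : okM w hh rr (T + 1) := by
  obtain ⟨s, hw, hcard, hcd, hsum⟩ := hok
  by_cases hA : ∃ x ∈ s, x + 1 < w ∧ (x + 1 ∉ s ∨ 2 ≤ s.count x)
  · obtain ⟨x, hxs, hxw, hxc⟩ := hA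
    refine ⟨(x+1) ::ₘ s.erase x, ?_, ?_, ?_, ?_⟩
    · intro y hy
      rcases Multiset.mem_cons.1 hy with rfl | hy
      · exact hxw
      · exact hw y (Multiset.mem_of_mem_erase hy)
    · simp [Multiset.card_erase_of_mem hxs]
      have : 0 < Multiset.card s := Multiset.card_pos_iff_exists_mem.2 ⟨x, hxs⟩
      omega
    · rcases hxc with hx1 | hx2
      · have hsub : insert (x+1) (s.toFinset.erase x) ⊆ ((x+1) ::ₘ s.erase x).toFinset := by
          intro y hy
          rcases Finset.mem_insert.1 hy with rfl | hy
          · simp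
          · obtain ⟨hyx, hys⟩ := Finset.mem_erase.1 hy
            simp only [Multiset.toFinset_cons, Finset.mem_insert, Multiset.mem_toFinset] at hys ⊢
            exact Or.inr ((Multiset.mem_erase_of_ne hyx).2 hys)
        have hcardin : (insert (x+1) (s.toFinset.erase x)).card = s.toFinset.card := by
          rw [Finset.card_insert_of_notMem, Finset.card_erase_of_mem (Multiset.mem_toFinset.2 hxs)]
          · have : 0 < s.toFinset.card := Finset.card_pos.2 ⟨x, Multiset.mem_toFinset.2 hxs⟩
            omega
          · intro hmem
            exact hx1 (Multiset.mem_toFinset.1 (Finset.mem_of_mem_erase hmem))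
        calc rr ≤ s.toFinset.card := hcd
        _ = _ := hcardin.symm
        _ ≤ _ := Finset.card_le_card hsub
      · have hxe : x ∈ s.erase x := by
          rw [← Multiset.count_pos, Multiset.count_erase_self]; omega
        have hsub : s.toFinset ⊆ ((x+1) ::ₘ s.erase x).toFinset := by
          intro y hy
          simp only [Multiset.toFinset_cons, Finset.mem_insert, Multiset.mem_toFinset] at hy ⊢
          by_cases hyx : y = x
          · exact Or.inr (hyx ▸ hxe)
          · exact Or.inr ((Multiset.mem_erase_of_ne hyx).2 hy)
        exact hcd.trans (Finset.card_le_card hsub)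
    · have := Multiset.cons_erase hxs
      have hs : x + (s.erase x).sum = T := by
        rw [← hsum]; conv_rhs => rw [← this]
        simp
      simp [Multiset.sum_cons]; omega
  · push_neg at hA
    set F := s.toFinset with hF
    set n := F.card with hn
    have hw2 : 2 ≤ w := by
      by_contra hc
      interval_cases w <;> simp_all
    have hstepF : ∀ x ∈ F, x + 1 < w → (x + 1 ∈ F ∧ s.count x = 1) := by
      intro x hx hxw
      have hxs := Multiset.mem_toFinset.1 hx
      obtain ⟨h1, h2⟩ := hA x hxs hxw
      have : 1 ≤ s.count x := Multiset.count_pos.2 hxs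
      exact ⟨Multiset.mem_toFinset.2 h1, by omega⟩
    have chain : ∀ j x, x ∈ F → x + j ≤ w - 1 → x + j ∈ F := by
      intro j
      induction j with
      | zero => intro x hx _; simpa using hx
      | succ j ih =>
        intro x hx hj
        have h1 : x + j ∈ F := ih x hx (by omega)
        have h2 := hstepF (x + j) h1 (by omega)
        have : x + (j+1) = (x + j) + 1 := by ring
        rw [this]
        exact h2.1
    have hub : ∀ x ∈ F, w ≤ x + n := by
      intro x hx
      have hsub : Finset.Icc x (w-1) ⊆ F := by
        intro y hy
        obtain ⟨h1, h2⟩ := Finset.mem_Icc.1 hy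
        have := chain (y - x) x hx (by omega)
        rwa [show x + (y - x) = y from by omega] at this
      have := Finset.card_le_card hsub
      rw [Nat.card_Icc] at this
      have hxw : x < w := hw x (Multiset.mem_toFinset.1 hx)
      omega
    -- key identity
    have key : T + (s.map (fun x => w - 1 - x)).sum = hh * (w - 1) := by
      have h1 : (s.map (fun x => x + (w - 1 - x))).sum
          = (s.map id).sum + (s.map (fun x => w - 1 - x)).sum := by
        rw [← Multiset.sum_map_add]; rfl
      have h2 : (s.map (fun x => x + (w - 1 - x))).sum = (s.map (fun _ => w - 1)).sum := by
        congr 1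
        apply Multiset.map_congr rfl
        intro x hx
        have := hw x hx
        omega
      rw [h2] at h1
      simp [Multiset.map_id, hsum, Multiset.map_const', hcard] at h1 ⊢
      omega
    -- bound the reflected sum
    have hb1 : (s.map (fun x => w - 1 - x)).sum = ∑ x ∈ F, s.count x • (w - 1 - x) :=
      Finset.sum_multiset_map_count s _
    have hb2 : ∑ x ∈ F, s.count x • (w - 1 - x) ≤ ∑ x ∈ F, (w - 1 - x) := by
      apply Finset.sum_le_sum
      intro x hx
      by_cases hx1 : x = w - 1
      · subst hx1; simp
      · have hxw : x < w := hw x (Multiset.mem_toFinset.1 hx)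
        have := (hstepF x hx (by omega)).2
        simp [this]
    have hinj : Set.InjOn (fun x => w - 1 - x) F := by
      intro x hx y hy hxy
      have hx' := hw x (Multiset.mem_toFinset.1 hx)
      have hy' := hw y (Multiset.mem_toFinset.1 hy)
      simp only at hxy
      omega
    have hb3 : ∑ x ∈ F, (w - 1 - x) = ∑ y ∈ F.image (fun x => w - 1 - x), y :=
      (Finset.sum_image (f := id) (fun x hx y hy => hinj hx hy)).symm
    have hb4 : F.image (fun x => w - 1 - x) ⊆ Finset.range n := by
      intro y hy
      obtain ⟨x, hx, rfl⟩ := Finset.mem_image.1 hy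
      have := hub x hx
      simp only [Finset.mem_range]
      have : 0 < n := Finset.card_pos.2 ⟨x, hx⟩
      have := hub x hx
      omega
    have hb5 : ∑ y ∈ F.image (fun x => w - 1 - x), y ≤ ∑ y ∈ Finset.range n, y :=
      Finset.sum_le_sum_of_subset hb4
    rw [Finset.sum_range_id] at hb5
    have hbig : hh * (w - 1) ≤ T + n * (n - 1) / 2 := by omega
    -- conclude rr < n
    have hrn : rr + 1 ≤ n := by
      by_contra hc
      have : n ≤ rr := by omega
      have := Nat.div_le_div_right (c := 2) (Nat.mul_le_mul this (Nat.sub_le_sub_right this 1))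
      omega
    -- bump the minimum
    have hFne : F.Nonempty := Finset.card_pos.1 (by omega)
    set c := F.min' hFne with hc
    have hcF : c ∈ F := F.min'_mem hFne
    have hcw : c < w - 1 := by
      obtain ⟨x, hxF, hxc⟩ : ∃ x ∈ F, x ≠ c := by
        by_contra hcon
        push_neg at hcon
        have : F ⊆ {c} := fun x hx => Finset.mem_singleton.2 (hcon x hx)
        have := Finset.card_le_card this
        simp at this
        omega
      have h1 : c ≤ x := F.min'_le x hxF
      have h2 : x < w := hw x (Multiset.mem_toFinset.1 hxF)
      omega
    obtain ⟨hc1F, hccount⟩ := hstepF c hcF (by omega)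
    have hcs : c ∈ s := Multiset.mem_toFinset.1 hcF
    refine ⟨(c+1) ::ₘ s.erase c, ?_, ?_, ?_, ?_⟩
    · intro y hy
      rcases Multiset.mem_cons.1 hy with rfl | hy
      · omega
      · exact hw y (Multiset.mem_of_mem_erase hy)
    · simp [Multiset.card_erase_of_mem hcs]
      have : 0 < Multiset.card s := Multiset.card_pos_iff_exists_mem.2 ⟨c, hcs⟩
      omega
    · have hsub : F.erase c ⊆ ((c+1) ::ₘ s.erase c).toFinset := by
        intro y hy
        obtain ⟨hyc, hyF⟩ := Finset.mem_erase.1 hy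
        simp only [Multiset.toFinset_cons, Finset.mem_insert, Multiset.mem_toFinset]
        exact Or.inr ((Multiset.mem_erase_of_ne hyc).2 (Multiset.mem_toFinset.1 hyF))
      have := Finset.card_le_card hsub
      rw [Finset.card_erase_of_mem hcF] at this
      omega
    · have heq := Multiset.cons_erase hcs
      have hs : c + (s.erase c).sum = T := by
        rw [← hsum]; conv_rhs => rw [← heq]
        simp
      simp [Multiset.sum_cons]; omega

lemma L1_mem {w hh rr T : ℕ} (hrr : 1 ≤ rr) (hrh : rr ≤ hh) (hrw : rr ≤ w)
    (hlo : rr * (rr - 1) / 2 ≤ T) (hhi : T + rr * (rr - 1) / 2 ≤ hh * (w - 1)) :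
    okM w hh rr T := by
  have base : okM w hh rr (rr * (rr - 1) / 2) := by
    refine ⟨(Finset.range rr).val + Multiset.replicate (hh - rr) 0, ?_, ?_, ?_, ?_⟩
    · intro x hx
      rcases Multiset.mem_add.1 hx with hx | hx
      · have : x < rr := Finset.mem_range.1 hx
        omega
      · have := Multiset.eq_of_mem_replicate hx
        omega
    · simp; omega
    · have hsub : Finset.range rr ⊆ ((Finset.range rr).val + Multiset.replicate (hh - rr) 0).toFinset := by
        intro i hi
        rw [Multiset.mem_toFinset, Multiset.mem_add]
        exact Or.inl hi
      calc rr = (Finset.range rr).card := by simp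
      _ ≤ _ := Finset.card_le_card hsub
    · rw [Multiset.sum_add, Multiset.sum_replicate]
      have : (Finset.range rr).val.sum = ∑ i ∈ Finset.range rr, i := by
        simp [Finset.sum]
      rw [this, Finset.sum_range_id]
      simp
  -- climb from base to T
  have main : ∀ j, rr * (rr - 1) / 2 + j + rr * (rr - 1) / 2 ≤ hh * (w - 1) →
      okM w hh rr (rr * (rr - 1) / 2 + j) := by
    intro j
    induction j with
    | zero => intro _; simpa using base
    | succ j ih =>
      intro hj
      have h1 := ih (by omega)
      have := increment hrr h1 (by omega)
      rwa [show rr * (rr - 1) / 2 + j + 1 = rr * (rr - 1) / 2 + (j + 1) from by omega] at this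
  have := main (T - rr * (rr - 1) / 2) (by omega)
  rwa [show rr * (rr - 1) / 2 + (T - rr * (rr - 1) / 2) = T from by omega] at this


lemma mod_shift (d X t : ℕ) (hd : 0 < d) (ht : t < d) : ∃ z, z < d ∧ (X + z) % d = t := by
  have hXd := Nat.div_add_mod X d
  have hXm : X % d < d := Nat.mod_lt X hd
  by_cases hc : X % d ≤ t
  · refine ⟨t - X % d, by omega, ?_⟩
    have h1 : X + (t - X % d) = d * (X / d) + t := by omega
    rw [h1, Nat.mul_add_mod]
    exact Nat.mod_eq_of_lt ht
  · refine ⟨d + t - X % d, by omega, ?_⟩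
    have hx : d * (X / d + 1) = d * (X / d) + d := by ring
    have h1 : X + (d + t - X % d) = d * (X / d + 1) + t := by omega
    rw [h1, Nat.mul_add_mod]
    exact Nat.mod_eq_of_lt ht

lemma mod_inj_on_Icc (d lo hi : ℕ) (hd : 0 < d) (hlen : hi - lo < d) :
    Set.InjOn (· % d) (Finset.Icc lo hi) := by
  have key : ∀ x y : ℕ, x ∈ (Finset.Icc lo hi : Set ℕ) → y ∈ (Finset.Icc lo hi : Set ℕ) →
      x % d = y % d → y ≤ x → x = y := by
    intro x y hx hy hxy hle
    simp only [Finset.coe_Icc, Set.mem_Icc] at hx hy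
    have h1 := Nat.div_add_mod x d
    have h2 := Nat.div_add_mod y d
    have h3 : x - y = d * (x / d) - d * (y / d) := by omega
    have h4 : d ∣ x - y := by
      rw [h3]
      exact Nat.dvd_sub (dvd_mul_right d _) (dvd_mul_right d _)
    have h5 : x - y = 0 := Nat.eq_zero_of_dvd_of_lt h4 (by omega)
    omega
  intro x hx y hy hxy
  rcases le_total y x with hle | hle
  · exact key x y hx hy hxy hle
  · exact (key y x hy hx hxy.symm hle).symm

-- card of image of an interval under % d
lemma card_Bv (d lo hi : ℕ) (hd : 0 < d) (hlohi : lo ≤ hi) :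
    ((Finset.Icc lo hi).image (· % d)).card = min d (hi - lo + 1) := by
  by_cases hc : hi - lo + 1 ≤ d
  · rw [Nat.min_eq_right hc, Finset.card_image_of_injOn (mod_inj_on_Icc d lo hi hd (by omega))]
    rw [Nat.card_Icc]; omega
  · rw [Nat.min_eq_left (by omega)]
    have : (Finset.Icc lo hi).image (· % d) = Finset.range d := by
      apply Finset.Subset.antisymm
      · intro x hx
        obtain ⟨y, _, rfl⟩ := Finset.mem_image.1 hx
        exact Finset.mem_range.2 (Nat.mod_lt y hd)
      · intro t htr
        have ht := Finset.mem_range.1 htr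
        obtain ⟨z, hz, hzt⟩ := mod_shift d lo t hd ht
        exact Finset.mem_image.2 ⟨lo + z, Finset.mem_Icc.2 ⟨by omega, by omega⟩, hzt⟩
    rw [this, Finset.card_range]

-- length claim for modFlex
lemma len_claim (μ d : ℕ) (hμ : 1 ≤ μ) (hd : 2 ≤ d) :
    min μ (d-1) * (min μ (d-1) - 1) / 2 + (d - 1) + min μ (d-1) * (min μ (d-1) - 1) / 2
      ≤ μ * (d - 1) := by
  have heven : min μ (d-1) * (min μ (d-1) - 1) / 2 * 2 = min μ (d-1) * (min μ (d-1) - 1) := by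
    have := Nat.even_mul_succ_self (min μ (d-1) - 1)
    obtain ⟨c, hc⟩ := this
    rcases Nat.eq_zero_or_pos (min μ (d-1)) with h | h
    · simp [h]
    · have : min μ (d-1) * (min μ (d-1) - 1) = (min μ (d-1) - 1) * (min μ (d-1) - 1 + 1) := by
        rw [Nat.sub_add_cancel h]; ring
      omega
  by_cases hc : μ ≤ d - 1
  · rw [Nat.min_eq_left hc] at *
    -- need μ*(μ-1) + (d-1) ≤ μ*(d-1), i.e. (d-1) ≤ μ*((d-1)-(μ-1)) = μ*(d-μ)
    have hsplit : d - 1 = (μ - 1) + (d - μ) := by omega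
    have hexp : μ * (d-1) = μ * (μ - 1) + μ * (d - μ) := by
      rw [hsplit, Nat.mul_add]
    have hbig : d - 1 ≤ μ * (d - μ) := by
      obtain ⟨a, rfl⟩ : ∃ a, μ = a + 1 := ⟨μ - 1, by omega⟩
      obtain ⟨b, hb⟩ : ∃ b, d - (a+1) = b + 1 := ⟨d - (a+1) - 1, by omega⟩
      rw [hb]
      have : (a+1) * (b+1) = a*b + a + b + 1 := by ring
      omega
    omega
  · rw [Nat.min_eq_right (by omega)] at *
    have h1 : (d-1) * (d-1-1) + (d-1) = (d-1)*(d-1) := by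
      obtain ⟨c, hc⟩ : ∃ c, d = c + 2 := ⟨d - 2, by omega⟩
      subst hc
      have e1 : c + 2 - 1 = c + 1 := by omega
      have e3 : c + 1 - 1 = c := by omega
      rw [e1, e3]; ring
    have h2 : (d-1)*(d-1) ≤ μ * (d-1) := Nat.mul_le_mul_right _ (by omega)
    omega




lemma modFlex (d μ t S : ℕ) (hd : 2 ≤ d) (hμ : 1 ≤ μ) (ht : t < d) :
    ∃ s : Multiset ℕ, (∀ x ∈ s, x < d) ∧ Multiset.card s = μ ∧
      min μ (d-1) ≤ s.toFinset.card ∧ (S + s.sum) % d = t := by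
  set ρ := min μ (d-1) with hρ
  set lo := ρ * (ρ - 1) / 2 with hlo
  obtain ⟨z, hz, hzt⟩ := mod_shift d (S + lo) t (by omega) ht
  obtain ⟨s, h1, h2, h3, h4⟩ := L1_mem (w := d) (hh := μ) (rr := ρ) (T := lo + z)
    (by omega) (by omega) (by omega) (by omega)
    (by have := len_claim μ d hμ hd; rw [← hρ, ← hlo] at this; omega)
  refine ⟨s, h1, h2, h3, ?_⟩
  rw [h4, show S + (lo + z) = S + lo + z from by omega, hzt]

lemma all_eq (s : Multiset ℕ) (u : ℕ) (hle : ∀ x ∈ s, x ≤ u)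
    (hsum : s.sum = Multiset.card s * u) : ∀ x ∈ s, x = u := by
  have h1 : (s.map (fun x => x + (u - x))).sum
      = (s.map id).sum + (s.map (fun x => u - x)).sum := by
    rw [← Multiset.sum_map_add]; rfl
  have h2 : (s.map (fun x => x + (u - x))).sum = (s.map (fun _ => u)).sum := by
    congr 1
    apply Multiset.map_congr rfl
    intro x hx
    have := hle x hx
    omega
  rw [h2, Multiset.map_const', Multiset.sum_replicate, Multiset.map_id] at h1
  have h3 : (s.map (fun x => u - x)).sum = 0 := by
    simp only [smul_eq_mul] at h1
    omega
  intro x hx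
  have h4 : u - x = 0 := by
    have := Multiset.sum_eq_zero_iff.1 h3 (u - x) (Multiset.mem_map_of_mem _ hx)
    exact this
  have := hle x hx
  omega

def fz (m e : ℕ) (q : ℕ × ℕ) : ZMod m := (q.1 : ZMod m) + (q.2 : ZMod m) * (e : ZMod m)

lemma sum_fz (m e : ℕ) (t : Multiset (ℕ × ℕ)) :
    (t.map (fz m e)).sum = fz m e ((t.map Prod.fst).sum, (t.map Prod.snd).sum) := by
  induction t using Multiset.induction with
  | empty => simp [fz]
  | cons q t ih =>
    rw [Multiset.map_cons, Multiset.sum_cons, ih, Multiset.map_cons, Multiset.sum_cons,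
      Multiset.map_cons, Multiset.sum_cons]
    unfold fz
    push_cast
    ring


section
variable {m e d : ℕ}

lemma fz_cast (q : ℕ × ℕ) : fz m e q = ((q.1 + q.2 * e : ℕ) : ZMod m) := by
  unfold fz; push_cast; ring

lemma fz_inj (hm : 0 < m) (hed : m = e * d) :
    Set.InjOn (fz m e) (Finset.range e ×ˢ Finset.range d) := by
  have : NeZero m := ⟨by omega⟩
  have he : 0 < e := by
    rcases Nat.eq_zero_or_pos e with h | h
    · subst h; simp at hed; omega
    · exact h
  intro q1 h1 q2 h2 heq
  simp only [Finset.coe_product, Set.mem_prod, Finset.mem_coe, Finset.mem_range] at h1 h2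
  rw [fz_cast, fz_cast] at heq
  have hlt1 : q1.1 + q1.2 * e < m := by
    rw [hed]
    calc q1.1 + q1.2 * e < e + q1.2 * e := by omega
    _ = (q1.2 + 1) * e := by ring
    _ ≤ d * e := Nat.mul_le_mul_right e (by omega)
    _ = e * d := by ring
  have hlt2 : q2.1 + q2.2 * e < m := by
    rw [hed]
    calc q2.1 + q2.2 * e < e + q2.2 * e := by omega
    _ = (q2.2 + 1) * e := by ring
    _ ≤ d * e := Nat.mul_le_mul_right e (by omega)
    _ = e * d := by ring
  have hval : q1.1 + q1.2 * e = q2.1 + q2.2 * e := by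
    have := congrArg ZMod.val heq
    rwa [ZMod.val_cast_of_lt hlt1, ZMod.val_cast_of_lt hlt2] at this
  have hmod : q1.1 = q2.1 := by
    have h1' : (q1.1 + q1.2 * e) % e = q1.1 := by
      rw [Nat.add_mul_mod_self_right, Nat.mod_eq_of_lt h1.1]
    have h2' : (q2.1 + q2.2 * e) % e = q2.1 := by
      rw [Nat.add_mul_mod_self_right, Nat.mod_eq_of_lt h2.1]
    rw [← h1', ← h2', hval]
  have hdiv : q1.2 = q2.2 := by
    have h1' : (q1.1 + q1.2 * e) / e = q1.2 := by
      rw [Nat.add_mul_div_right _ _ he, Nat.div_eq_of_lt h1.1]; omega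
    have h2' : (q2.1 + q2.2 * e) / e = q2.2 := by
      rw [Nat.add_mul_div_right _ _ he, Nat.div_eq_of_lt h2.1]; omega
    rw [← h1', ← h2', hval]
  exact Prod.ext hmod hdiv

lemma fz_mod (hed : m = e * d) (n j : ℕ) : fz m e (n, j) = fz m e (n, j % d) := by
  rw [fz_cast, fz_cast]
  have key : n + j * e = n + j % d * e + j / d * m := by
    conv_lhs => rw [← Nat.div_add_mod j d]
    rw [hed]; ring
  rw [key]
  push_cast
  simp [ZMod.natCast_self]

end

lemma fz_val {m e d : ℕ} (hm : 0 < m) (hed : m = e * d) (q : ℕ × ℕ)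
    (h1 : q.1 < e) (h2 : q.2 < d) : (fz m e q).val = q.1 + q.2 * e := by
  have : NeZero m := ⟨by omega⟩
  rw [fz_cast]
  apply ZMod.val_cast_of_lt
  rw [hed]
  calc q.1 + q.2 * e < e + q.2 * e := by omega
  _ = (q.2 + 1) * e := by ring
  _ ≤ d * e := Nat.mul_le_mul_right e (by omega)
  _ = e * d := by ring

set_option maxHeartbeats 1000000 in
lemma genSumset_bajnok_eq (m r d u v e h : ℕ)
    (hm : 1 ≤ m) (hr : 2 ≤ r) (hd1 : 1 ≤ d) (hv1 : 1 ≤ v) (hvd : v ≤ d) (hrv : r ≤ v)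
    (hrd : r < d) (hemd : e = m / d) (hed : m = e * d) (hue : u < e) (hh : r < h) :
    genSumset h r (bajnokSet m d u v) =
      ↑(((Finset.range (h*u) ×ˢ Finset.range d) ∪
          ({h*u} ×ˢ ((Finset.Icc (r*(r-1)/2) (h*(v-1) - r*(r-1)/2)).image (· % d)))).image
        (fz m e)) := by
  have hm0 : 0 < m := hm
  have hd0 : 0 < d := hd1
  have he0 : 0 < e := by
    rcases Nat.eq_zero_or_pos e with h0 | h0
    · subst h0; simp at hed; omega
    · exact h0
  set P : Finset (ℕ × ℕ) :=
    (Finset.range u ×ˢ Finset.range d) ∪ ({u} ×ˢ Finset.range v) with hP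
  have hA : bajnokSet m d u v = P.image (fz m e) := by
    unfold bajnokSet fz
    rw [hemd]
  set lo := r * (r-1) / 2 with hlo
  set hi := h * (v-1) - r * (r-1) / 2 with hhi
  set Bv := (Finset.Icc lo hi).image (· % d) with hBv
  have hPbound : ∀ q ∈ P, q.1 < e ∧ q.2 < d := by
    intro q hq
    rcases Finset.mem_union.1 hq with hq | hq
    · obtain ⟨h1, h2⟩ := Finset.mem_product.1 hq
      exact ⟨lt_trans (Finset.mem_range.1 h1) hue, Finset.mem_range.1 h2⟩
    · obtain ⟨h1, h2⟩ := Finset.mem_product.1 hq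
      rw [Finset.mem_singleton.1 h1]
      exact ⟨hue, lt_of_lt_of_le (Finset.mem_range.1 h2) hvd⟩
  have hPfst : ∀ q ∈ P, q.1 ≤ u := by
    intro q hq
    rcases Finset.mem_union.1 hq with hq | hq
    · exact le_of_lt (Finset.mem_range.1 (Finset.mem_product.1 hq).1)
    · exact le_of_eq (Finset.mem_singleton.1 (Finset.mem_product.1 hq).1)
  -- recovery function
  set φ : ZMod m → ℕ × ℕ := fun x => (x.val % e, x.val / e) with hφ
  have hrecover : ∀ q : ℕ × ℕ, q.1 < e → q.2 < d → φ (fz m e q) = q := by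
    intro q h1 h2
    have hv := fz_val hm0 hed q h1 h2
    simp only [hφ, hv]
    have hmod : (q.1 + q.2 * e) % e = q.1 := by
      rw [Nat.add_mul_mod_self_right, Nat.mod_eq_of_lt h1]
    have hdiv : (q.1 + q.2 * e) / e = q.2 := by
      rw [Nat.add_mul_div_right _ _ he0, Nat.div_eq_of_lt h1]
      omega
    rw [hmod, hdiv]
  have hinjP : Set.InjOn (fz m e) P := by
    intro q1 h1 q2 h2 heq
    have b1 := hPbound q1 h1
    have b2 := hPbound q2 h2
    have := hrecover q1 b1.1 b1.2
    rw [heq, hrecover q2 b2.1 b2.2] at this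
    exact this.symm
  -- the generic "a multiset of pairs gives an element of genSumset" helper is inlined below
  apply Set.eq_of_subset_of_subset
  · -- ⊆
    intro x hx
    obtain ⟨s, hsA, hcard, hcd, hsum⟩ := hx
    set t : Multiset (ℕ × ℕ) := s.map φ with ht
    have htP : ∀ q ∈ t, q ∈ P := by
      intro q hq
      obtain ⟨y, hy, rfl⟩ := Multiset.mem_map.1 hq
      have hyA : y ∈ bajnokSet m d u v := hsA (Multiset.mem_toFinset.2 hy)
      rw [hA] at hyA
      obtain ⟨q', hq', rfl⟩ := Finset.mem_image.1 hyA
      have b := hPbound q' hq'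
      rw [hrecover q' b.1 b.2]
      exact hq'
    have htmap : t.map (fz m e) = s := by
      rw [ht, Multiset.map_map]
      have : s.map (fz m e ∘ φ) = s.map id := by
        apply Multiset.map_congr rfl
        intro y hy
        have hyA : y ∈ bajnokSet m d u v := hsA (Multiset.mem_toFinset.2 hy)
        rw [hA] at hyA
        obtain ⟨q', hq', rfl⟩ := Finset.mem_image.1 hyA
        have b := hPbound q' hq'
        simp only [Function.comp_apply, id_eq]
        rw [hrecover q' b.1 b.2]
      rw [this, Multiset.map_id]
    have htcard : Multiset.card t = h := by rw [ht, Multiset.card_map, hcard]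
    have htcd : r ≤ t.toFinset.card := by
      have h1 : s.toFinset = t.toFinset.image (fz m e) := by
        rw [← htmap, Multiset.toFinset_map]
      calc r ≤ s.toFinset.card := hcd
      _ = (t.toFinset.image (fz m e)).card := by rw [h1]
      _ ≤ t.toFinset.card := Finset.card_image_le
    set N := (t.map Prod.fst).sum with hN
    set J := (t.map Prod.snd).sum with hJ
    have hNle : N ≤ h * u := by
      have := Multiset.sum_le_card_nsmul (t.map Prod.fst) u (by
        intro x hx
        obtain ⟨q, hq, rfl⟩ := Multiset.mem_map.1 hx
        exact hPfst q (htP q hq))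
      simpa [htcard] using this
    have hxNJ : x = fz m e (N, J) := by
      rw [← hsum, ← htmap, sum_fz]
    by_cases hNc : N = h * u
    · -- all first coordinates are u
      have hall : ∀ q ∈ t, q.1 = u := by
        have := all_eq (t.map Prod.fst) u
          (by
            intro x hx
            obtain ⟨q, hq, rfl⟩ := Multiset.mem_map.1 hx
            exact hPfst q (htP q hq))
          (by rw [Multiset.card_map, htcard, ← hN, hNc])
        intro q hq
        exact this q.1 (Multiset.mem_map_of_mem _ hq)
      set js := t.map Prod.snd with hjs
      have hjsv : ∀ x ∈ js, x < v := by
        intro x hx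
        obtain ⟨q, hq, rfl⟩ := Multiset.mem_map.1 hx
        have hqP := htP q hq
        rcases Finset.mem_union.1 hqP with hq' | hq'
        · have := Finset.mem_range.1 (Finset.mem_product.1 hq').1
          rw [hall q hq] at this
          omega
        · exact Finset.mem_range.1 (Finset.mem_product.1 hq').2
      have hjscd : r ≤ js.toFinset.card := by
        have hsub : t.toFinset ⊆ js.toFinset.image (fun j => (u, j)) := by
          intro q hq
          have hqt := Multiset.mem_toFinset.1 hq
          have : q = (u, q.2) := by
            rw [← hall q hqt]
          rw [this]
          exact Finset.mem_image_of_mem _ (Multiset.mem_toFinset.2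
            (Multiset.mem_map_of_mem _ hqt))
        calc r ≤ t.toFinset.card := htcd
        _ ≤ (js.toFinset.image (fun j => (u, j))).card := Finset.card_le_card hsub
        _ ≤ js.toFinset.card := Finset.card_image_le
      have hJlo : lo ≤ J := L1_lb js hjscd rfl
      have hJub : J + lo ≤ h * (v - 1) := L1_ub js hjsv (by rw [hjs, Multiset.card_map, htcard]) hjscd rfl
      rw [hxNJ, hNc, fz_mod hed]
      apply Finset.mem_coe.2
      apply Finset.mem_image_of_mem
      apply Finset.mem_union_right
      rw [Finset.mem_product]
      constructor
      · exact Finset.mem_singleton_self _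
      · rw [hBv]
        exact Finset.mem_image.2 ⟨J, Finset.mem_Icc.2 ⟨hJlo, by omega⟩, rfl⟩
    · have hNlt : N < h * u := by omega
      rw [hxNJ, fz_mod hed]
      apply Finset.mem_coe.2
      apply Finset.mem_image_of_mem
      apply Finset.mem_union_left
      rw [Finset.mem_product]
      exact ⟨Finset.mem_range.2 hNlt, Finset.mem_range.2 (Nat.mod_lt _ hd0)⟩
  · -- ⊇
    intro x hx
    obtain ⟨q, hqT, rfl⟩ := Finset.mem_image.1 (Finset.mem_coe.1 hx)
    rcases Finset.mem_union.1 hqT with hq | hq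
    · -- mixed case
      obtain ⟨hn, hj⟩ := Finset.mem_product.1 hq
      have hn' : q.1 < h * u := Finset.mem_range.1 hn
      have hj' : q.2 < d := Finset.mem_range.1 hj
      have hu1 : 1 ≤ u := by
        by_contra hc
        have : u = 0 := by omega
        rw [this, Nat.mul_zero] at hn'
        omega
      obtain ⟨a, b, hab, hblt, halt⟩ : ∃ a b, a * u + b = q.1 ∧ b < u ∧ a < h := by
        refine ⟨q.1 / u, q.1 % u, Nat.div_add_mod' q.1 u, Nat.mod_lt _ hu1,
          Nat.div_lt_of_lt_mul (by rwa [Nat.mul_comm] at hn')⟩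
      -- the pattern for row u
      set pat : Multiset ℕ := (Finset.range a).val.map (fun i => min i (v-1)) with hpat
      have hpatcard : Multiset.card pat = a := by simp [hpat]
      have hpatv : ∀ x ∈ pat, x < v := by
        intro x hx
        obtain ⟨i, _, rfl⟩ := Multiset.mem_map.1 hx
        omega
      have hpatcd : min a v ≤ pat.toFinset.card := by
        have hsub : Finset.range (min a v) ⊆ pat.toFinset := by
          intro i hi
          have hi' := Finset.mem_range.1 hi
          rw [Multiset.mem_toFinset, hpat]
          refine Multiset.mem_map.2 ⟨i, ?_, by omega⟩
          rw [Finset.mem_val, Finset.mem_range]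
          omega
        calc min a v = (Finset.range (min a v)).card := by simp
        _ ≤ _ := Finset.card_le_card hsub
      set S := pat.sum with hS
      set μ := h - a with hμ
      have hμ1 : 1 ≤ μ := by omega
      obtain ⟨jsl, hjsd, hjscard, hjscd, hjssum⟩ := modFlex d μ q.2 S (by omega) hμ1 hj'
      have hjsl0 : jsl ≠ 0 := by
        intro hc
        rw [hc] at hjscard
        simp at hjscard
        omega
      obtain ⟨t1, ht1⟩ := Multiset.exists_mem_of_ne_zero hjsl0
      set rest := jsl.erase t1 with hrest
      have hcons : t1 ::ₘ rest = jsl := Multiset.cons_erase ht1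
      have hrestcard : Multiset.card rest = μ - 1 := by
        rw [hrest, Multiset.card_erase_of_mem ht1, hjscard]
        exact Nat.pred_eq_sub_one
      set pairs : Multiset (ℕ × ℕ) :=
        pat.map (fun x => (u, x)) + ((b, t1) ::ₘ rest.map (fun x => ((0:ℕ), x))) with hpairs
      have hpairsP : ∀ p ∈ pairs, p ∈ P := by
        intro p hp
        rw [hpairs] at hp
        rcases Multiset.mem_add.1 hp with hp | hp
        · obtain ⟨x, hx, rfl⟩ := Multiset.mem_map.1 hp
          apply Finset.mem_union_right
          rw [Finset.mem_product]
          exact ⟨Finset.mem_singleton_self _, Finset.mem_range.2 (hpatv x hx)⟩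
        · rcases Multiset.mem_cons.1 hp with rfl | hp
          · apply Finset.mem_union_left
            rw [Finset.mem_product]
            exact ⟨Finset.mem_range.2 hblt, Finset.mem_range.2 (hjsd t1 ht1)⟩
          · obtain ⟨x, hx, rfl⟩ := Multiset.mem_map.1 hp
            apply Finset.mem_union_left
            rw [Finset.mem_product]
            exact ⟨Finset.mem_range.2 hu1, Finset.mem_range.2 (hjsd x (by
              rw [← hcons]; exact Multiset.mem_cons_of_mem hx))⟩
      have hpairscard : Multiset.card pairs = h := by
        rw [hpairs]
        simp [hpatcard, hrestcard]
        omega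
      have hfstsum : (pairs.map Prod.fst).sum = q.1 := by
        rw [hpairs]
        simp only [Multiset.map_add, Multiset.sum_add, Multiset.map_map, Multiset.map_cons,
          Multiset.sum_cons]
        have h1 : (pat.map (Prod.fst ∘ fun x => (u, x))).sum = a * u := by
          have : pat.map (Prod.fst ∘ fun x => (u, x)) = pat.map (fun _ => u) := rfl
          rw [this, Multiset.map_const', Multiset.sum_replicate, hpatcard]
          simp [Nat.mul_comm]
        have h2 : (rest.map (Prod.fst ∘ fun x => ((0:ℕ), x))).sum = 0 := by
          have : rest.map (Prod.fst ∘ fun x => ((0:ℕ), x)) = rest.map (fun _ => (0:ℕ)) := rfl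
          rw [this, Multiset.map_const', Multiset.sum_replicate]
          simp
        rw [h1, h2]
        omega
      have hsndsum : (pairs.map Prod.snd).sum = S + jsl.sum := by
        rw [hpairs]
        simp only [Multiset.map_add, Multiset.sum_add, Multiset.map_map, Multiset.map_cons,
          Multiset.sum_cons]
        have h1 : (pat.map (Prod.snd ∘ fun x => (u, x))).sum = S := by
          have : pat.map (Prod.snd ∘ fun x => (u, x)) = pat.map id := rfl
          rw [this, Multiset.map_id]
        have h2 : (rest.map (Prod.snd ∘ fun x => ((0:ℕ), x))).sum = rest.sum := by
          have : rest.map (Prod.snd ∘ fun x => ((0:ℕ), x)) = rest.map id := rfl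
          rw [this, Multiset.map_id]
        rw [h1, h2]
        have : jsl.sum = t1 + rest.sum := by
          rw [← hcons, Multiset.sum_cons]
        omega
      -- conclude membership
      refine ⟨pairs.map (fz m e), ?_, ?_, ?_, ?_⟩
      · intro y hy
        obtain ⟨p, hp, rfl⟩ := Multiset.mem_map.1 (Multiset.mem_toFinset.1 hy)
        rw [hA]
        exact Finset.mem_image_of_mem _ (hpairsP p hp)
      · rw [Multiset.card_map, hpairscard]
      · have htf : (pairs.map (fz m e)).toFinset = pairs.toFinset.image (fz m e) :=
          Multiset.toFinset_map _ _
        have hinj2 : Set.InjOn (fz m e) pairs.toFinset := fun p1 h1 p2 h2 heq =>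
          hinjP (hpairsP p1 (Multiset.mem_toFinset.1 h1))
            (hpairsP p2 (Multiset.mem_toFinset.1 h2)) heq
        rw [htf, Finset.card_image_of_injOn hinj2]
        -- card of pairs.toFinset
        have hsplit : pairs.toFinset =
            (pat.map (fun x => (u, x))).toFinset ∪
            ((b, t1) ::ₘ rest.map (fun x => ((0:ℕ), x))).toFinset := by
          rw [hpairs, Multiset.toFinset_add]
        have hdisj : Disjoint ((pat.map (fun x => (u, x))).toFinset)
            (((b, t1) ::ₘ rest.map (fun x => ((0:ℕ), x))).toFinset) := by
          rw [Finset.disjoint_left]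
          intro p hp1 hp2
          obtain ⟨x, _, rfl⟩ := Multiset.mem_map.1 (Multiset.mem_toFinset.1 hp1)
          rcases Multiset.mem_cons.1 (Multiset.mem_toFinset.1 hp2) with heq | hp2'
          · have : u = b := congrArg Prod.fst heq
            omega
          · obtain ⟨x', _, heq⟩ := Multiset.mem_map.1 hp2'
            have : u = (0:ℕ) := congrArg Prod.fst heq.symm
            omega
        have hcard1 : (pat.map (fun x => (u, x))).toFinset.card = pat.toFinset.card := by
          rw [Multiset.toFinset_map]
          exact Finset.card_image_of_injective _ (fun x y hxy => by
            simpa using congrArg Prod.snd hxy)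
        have hcard2 : min μ (d-1) ≤
            (((b, t1) ::ₘ rest.map (fun x => ((0:ℕ), x))).toFinset).card := by
          by_cases hb0 : b = 0
          · subst hb0
            have : ((0:ℕ), t1) ::ₘ rest.map (fun x => ((0:ℕ), x))
                = jsl.map (fun x => ((0:ℕ), x)) := by
              rw [← hcons, Multiset.map_cons]
            rw [this, Multiset.toFinset_map,
              Finset.card_image_of_injective _ (fun x y hxy => by
                simpa using congrArg Prod.snd hxy : Function.Injective (fun x => ((0:ℕ), x)))]
            exact hjscd
          · have hsub2 : insert (b, t1) ((rest.map (fun x => ((0:ℕ), x))).toFinset)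
                ⊆ (((b, t1) ::ₘ rest.map (fun x => ((0:ℕ), x))).toFinset) := by
              rw [Multiset.toFinset_cons]
            have hnotmem : (b, t1) ∉ (rest.map (fun x => ((0:ℕ), x))).toFinset := by
              intro hc
              obtain ⟨x, _, heq⟩ := Multiset.mem_map.1 (Multiset.mem_toFinset.1 hc)
              have : (0:ℕ) = b := congrArg Prod.fst heq
              omega
            have hrestcd : jsl.toFinset.card ≤ rest.toFinset.card + 1 := by
              have : jsl.toFinset = insert t1 rest.toFinset := by
                rw [← hcons, Multiset.toFinset_cons]
              rw [this]
              exact Finset.card_insert_le _ _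
            have hrest2 : (rest.map (fun x => ((0:ℕ), x))).toFinset.card
                = rest.toFinset.card := by
              rw [Multiset.toFinset_map]
              exact Finset.card_image_of_injective _ (fun x y hxy => by
                simpa using congrArg Prod.snd hxy)
            calc min μ (d-1) ≤ jsl.toFinset.card := hjscd
            _ ≤ rest.toFinset.card + 1 := hrestcd
            _ = (insert (b, t1) ((rest.map (fun x => ((0:ℕ), x))).toFinset)).card := by
                rw [Finset.card_insert_of_notMem hnotmem, hrest2]
            _ ≤ _ := Finset.card_le_card hsub2
        rw [hsplit, Finset.card_union_of_disjoint hdisj, hcard1]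
        have : min a v + min μ (d-1) ≥ r := by omega
        omega
      · rw [sum_fz, hfstsum, hsndsum, fz_mod hed, hjssum]
    · -- pure row-u case
      obtain ⟨hn, hj⟩ := Finset.mem_product.1 hq
      have hn' : q.1 = h * u := Finset.mem_singleton.1 hn
      obtain ⟨J, hJmem, hJmod⟩ := Finset.mem_image.1 hj
      obtain ⟨hJlo, hJhi⟩ := Finset.mem_Icc.1 hJmem
      obtain ⟨js, hjsv, hjscard, hjscd, hjssum⟩ := L1_mem (w := v) (hh := h) (rr := r) (T := J)
        (by omega) (by omega) hrv hJlo (by omega)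
      refine ⟨js.map (fun x => fz m e (u, x)), ?_, ?_, ?_, ?_⟩
      · intro y hy
        obtain ⟨x, hx, rfl⟩ := Multiset.mem_map.1 (Multiset.mem_toFinset.1 hy)
        rw [hA]
        apply Finset.mem_image_of_mem
        apply Finset.mem_union_right
        rw [Finset.mem_product]
        exact ⟨Finset.mem_singleton_self _, Finset.mem_range.2 (hjsv x hx)⟩
      · rw [Multiset.card_map, hjscard]
      · have h1 : js.map (fun x => fz m e (u, x)) = (js.map (fun x => (u, x))).map (fz m e) := by
          rw [Multiset.map_map]; rfl
        rw [h1, Multiset.toFinset_map, Multiset.toFinset_map]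
        rw [Finset.image_image]
        have hinj3 : Set.InjOn (fz m e ∘ fun x => (u, x)) js.toFinset := by
          intro x1 h1' x2 h2' heq
          have m1 : ((u : ℕ), x1) ∈ (P : Set (ℕ × ℕ)) := by
            apply Finset.mem_union_right
            rw [Finset.mem_product]
            exact ⟨Finset.mem_singleton_self _,
              Finset.mem_range.2 (hjsv x1 (Multiset.mem_toFinset.1 h1'))⟩
          have m2 : ((u : ℕ), x2) ∈ (P : Set (ℕ × ℕ)) := by
            apply Finset.mem_union_right
            rw [Finset.mem_product]
            exact ⟨Finset.mem_singleton_self _,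
              Finset.mem_range.2 (hjsv x2 (Multiset.mem_toFinset.1 h2'))⟩
          have := hinjP m1 m2 heq
          simpa using congrArg Prod.snd this
        rw [Finset.card_image_of_injOn hinj3]
        exact hjscd
      · have h1 : js.map (fun x => fz m e (u, x)) = (js.map (fun x => (u, x))).map (fz m e) := by
          rw [Multiset.map_map]; rfl
        rw [h1, sum_fz]
        have h2 : ((js.map (fun x => (u, x))).map Prod.fst).sum = h * u := by
          rw [Multiset.map_map]
          have : js.map (Prod.fst ∘ fun x => (u, x)) = js.map (fun _ => u) := rfl
          rw [this, Multiset.map_const', Multiset.sum_replicate, hjscard]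
          simp [Nat.mul_comm]
        have h3 : ((js.map (fun x => (u, x))).map Prod.snd).sum = J := by
          rw [Multiset.map_map]
          have : js.map (Prod.snd ∘ fun x => (u, x)) = js.map id := rfl
          rw [this, Multiset.map_id, hjssum]
        rw [h2, h3, fz_mod hed, hJmod, ← hn']

theorem genSumset_card_bajnokSet_r_le_v (m k r d u v : ℕ)
    (hm : 1 ≤ m) (hr : 2 ≤ r) (hrk : r ≤ k) (hkm : k ≤ m) (hd : d ∣ m) (hd1 : 1 ≤ d)
    (hv1 : 1 ≤ v) (hvd : v ≤ d) (hrv : r ≤ v) (hrd : r < d)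
    (hkuv : k = u * d + v) (h : ℕ) (hh : r < h) :
    (genSumset h r (bajnokSet m d u v)).ncard =
      min m (min ((h * ((k + d - 1) / d) - h + 1) * d) (h * (k - 1) - r * (r - 1) + 1)) := by
  haveI : NeZero m := ⟨by omega⟩
  set e := m / d with hemd
  have hed : m = e * d := (Nat.div_mul_cancel hd).symm
  have hd0 : 0 < d := hd1
  have he0 : 0 < e := by
    rcases Nat.eq_zero_or_pos e with h0 | h0
    · rw [h0] at hed; simp at hed; omega
    · exact h0
  have hue : u < e := by
    have h1 : u * d + v ≤ e * d := by omega
    have h2 : u * d < e * d := by omega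
    exact Nat.lt_of_mul_lt_mul_right h2
  rw [genSumset_bajnok_eq m r d u v e h hm hr hd1 hv1 hvd hrv hrd hemd hed hue hh,
    Set.ncard_coe_finset]
  set lo := r * (r-1) / 2 with hlo
  set hi := h * (v-1) - r * (r-1) / 2 with hhi
  set Bv := (Finset.Icc lo hi).image (· % d) with hBv
  set T : Finset (ℕ × ℕ) := (Finset.range (h*u) ×ˢ Finset.range d) ∪ ({h*u} ×ˢ Bv) with hT
  -- arithmetic facts
  have hloeven : lo * 2 = r * (r - 1) := by
    obtain ⟨c, hc⟩ := Nat.even_mul_succ_self (r - 1)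
    have h1 : r * (r-1) = (r-1) * ((r-1)+1) := by
      rw [Nat.sub_add_cancel (by omega)]; ring
    omega
  have hvr : r * (r - 1) ≤ h * (v - 1) := by
    calc r * (r-1) ≤ (r+1) * (r-1) := Nat.mul_le_mul_right _ (by omega)
    _ ≤ h * (v-1) := Nat.mul_le_mul (by omega) (by omega)
  have hlohi : lo ≤ hi := by omega
  have hIccL : hi - lo + 1 = h * (v-1) - r * (r-1) + 1 := by omega
  have hceil : (k + d - 1) / d = u + 1 := by
    have h1 : k + d - 1 = (v + d - 1) + u * d := by omega
    rw [h1, Nat.add_mul_div_right _ _ hd0]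
    have h2 : (v + d - 1) / d = 1 := Nat.div_eq_of_lt_le (by omega) (by
      show v + d - 1 < (1 + 1) * d
      omega)
    omega
  have hterm2 : (h * ((k + d - 1) / d) - h + 1) * d = h * u * d + d := by
    rw [hceil]
    have : h * (u + 1) = h * u + h := by ring
    rw [this]
    have : h * u + h - h + 1 = h * u + 1 := by omega
    rw [this]
    ring
  have hterm3 : h * (k - 1) = h * u * d + h * (v - 1) := by
    have h1 : k - 1 = u * d + (v - 1) := by omega
    rw [h1, Nat.mul_add, ← Nat.mul_assoc]
  by_cases hcase : h * u < e
  · -- no wrap-around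
    have hTsub : ∀ q ∈ T, q.1 < e ∧ q.2 < d := by
      intro q hq
      rcases Finset.mem_union.1 hq with hq' | hq'
      · obtain ⟨h1, h2⟩ := Finset.mem_product.1 hq'
        exact ⟨lt_trans (Finset.mem_range.1 h1) hcase, Finset.mem_range.1 h2⟩
      · obtain ⟨h1, h2⟩ := Finset.mem_product.1 hq'
        refine ⟨?_, ?_⟩
        · rw [Finset.mem_singleton.1 h1]; exact hcase
        · obtain ⟨J, _, hJ⟩ := Finset.mem_image.1 h2
          rw [← hJ]
          exact Nat.mod_lt _ hd0
    have hinjT : Set.InjOn (fz m e) T := by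
      intro q1 h1 q2 h2 heq
      have b1 := hTsub q1 (Finset.mem_coe.1 h1)
      have b2 := hTsub q2 (Finset.mem_coe.1 h2)
      exact fz_inj (show 0 < m by omega) hed
        (Set.mem_prod.2 ⟨Finset.mem_coe.2 (Finset.mem_range.2 b1.1),
          Finset.mem_coe.2 (Finset.mem_range.2 b1.2)⟩)
        (Set.mem_prod.2 ⟨Finset.mem_coe.2 (Finset.mem_range.2 b2.1),
          Finset.mem_coe.2 (Finset.mem_range.2 b2.2)⟩) heq
    rw [Finset.card_image_of_injOn hinjT]
    have hdisj : Disjoint (Finset.range (h*u) ×ˢ Finset.range d) ({h*u} ×ˢ Bv) := by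
      rw [Finset.disjoint_left]
      intro q hq1 hq2
      have h1 := Finset.mem_range.1 (Finset.mem_product.1 hq1).1
      have h2 := Finset.mem_singleton.1 (Finset.mem_product.1 hq2).1
      omega
    rw [hT, Finset.card_union_of_disjoint hdisj, Finset.card_product, Finset.card_product]
    rw [Finset.card_range, Finset.card_singleton, Finset.card_range]
    rw [show Bv.card = min d (hi - lo + 1) from by rw [hBv]; exact card_Bv d lo hi hd0 hlohi]
    have hm2 : h * u * d + d ≤ m := by
      have : (h * u + 1) * d ≤ e * d := Nat.mul_le_mul_right _ (by omega)
      have h2 : (h * u + 1) * d = h * u * d + d := by ring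
      omega
    rw [hterm2]
    omega
  · -- wrap-around: the image is everything
    have huniv : T.image (fz m e) = Finset.univ := by
      apply Finset.eq_univ_of_forall
      intro x
      have hval : x.val < m := ZMod.val_lt x
      set n := x.val % e with hn
      set jj := x.val / e with hjj
      have hne : n < e := Nat.mod_lt _ he0
      have hjd : jj < d := by
        rw [hjj]
        have : x.val < d * e := by rw [Nat.mul_comm]; omega
        exact Nat.div_lt_iff_lt_mul he0 |>.2 this
      have hmem : (n, jj) ∈ T := by
        apply Finset.mem_union_left
        rw [Finset.mem_product]
        exact ⟨Finset.mem_range.2 (by omega), Finset.mem_range.2 hjd⟩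
      have hfz : fz m e (n, jj) = x := by
        rw [fz_cast]
        have h1 : n + jj * e = x.val := by
          rw [hn, hjj]; exact Nat.mod_add_div' x.val e
        rw [h1]
        exact (ZMod.natCast_val x).trans (by simp)
      exact hfz ▸ Finset.mem_image_of_mem _ hmem
    rw [huniv, Finset.card_univ, ZMod.card]
    have hBle : m ≤ (h * ((k + d - 1) / d) - h + 1) * d := by
      rw [hterm2]
      have : e * d ≤ h * u * d := Nat.mul_le_mul_right _ (by omega)
      omega
    have hCle : m + r * (r - 1) ≤ h * (k - 1) := by
      rw [hterm3]
      have h1 : e * d ≤ h * u * d := Nat.mul_le_mul_right _ (by omega)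
      have h2 : (r+1) * (r-1) ≤ h * (v-1) := Nat.mul_le_mul (by omega) (by omega)
      have h3 : r * (r-1) + 1 ≤ (r+1) * (r-1) + 1 := by
        have := Nat.mul_le_mul_right (r-1) (show r ≤ r+1 by omega)
        omega
      omega
    omega
end

section
/- Let $p$ be a prime and let $h, r, k$ be positive integers with $r \leq k \leq p$ and $h > r$. Then there exists a subset $A$ of $\mathbb{Z}/p\mathbb{Z}$ with $|A| = k$ such that $|h^{(\geq r)}A| \leq \min\{p,\; h(k-1) - r(r-1) + 1\}$. -/
open Pointwise

/-- A finset of naturals of cardinality `m` has sum at least `0 + 1 + ⋯ + (m-1)`. -/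
lemma sum_range_card_le_sum (s : Finset ℕ) : ∑ i ∈ Finset.range s.card, i ≤ ∑ i ∈ s, i := by
  classical
  induction s using Finset.strongInduction with
  | _ s ih =>
    rcases s.eq_empty_or_nonempty with rfl | hne
    · simp
    · have hmax : s.max' hne ∈ s := s.max'_mem hne
      have hsub : s ⊆ Finset.range (s.max' hne + 1) := by
        intro x hx
        simpa [Nat.lt_succ_iff] using s.le_max' x hx
      have hcard : s.card ≤ s.max' hne + 1 := by
        simpa using Finset.card_le_card hsub
      have hcard' : (s.erase (s.max' hne)).card = s.card - 1 :=
        Finset.card_erase_of_mem hmax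
      have hIH := ih (s.erase (s.max' hne)) (Finset.erase_ssubset hmax)
      have hsum : ∑ i ∈ s, i = s.max' hne + ∑ i ∈ s.erase (s.max' hne), i :=
        (Finset.add_sum_erase s id hmax).symm
      have hpos : 1 ≤ s.card := hne.card_pos
      have : ∑ i ∈ Finset.range s.card, i
          = (s.card - 1) + ∑ i ∈ Finset.range (s.card - 1), i := by
        conv_lhs => rw [show s.card = (s.card - 1) + 1 by omega]
        rw [Finset.sum_range_succ]; ring
      rw [this, hsum]
      have := hIH
      rw [hcard'] at this
      omega

lemma multiset_sum_lower (t : Multiset ℕ) : ∑ i ∈ Finset.range t.toFinset.card, i ≤ t.sum := by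
  refine le_trans (sum_range_card_le_sum t.toFinset) ?_
  have h1 : t.dedup ≤ t := Multiset.dedup_le t
  obtain ⟨u, hu⟩ := Multiset.le_iff_exists_add.mp h1
  have h2 : (∑ i ∈ t.toFinset, i) = t.dedup.sum := by
    simp [Finset.sum, Multiset.toFinset]
  have h3 : t.dedup.sum ≤ t.sum := by
    conv_rhs => rw [hu]
    rw [Multiset.sum_add]
    exact Nat.le_add_right _ _
  rw [h2]; exact h3

theorem exists_genSumset_card_le (p : ℕ) (hp : p.Prime) (h r k : ℕ)
    (hr : 1 ≤ r) (hrk : r ≤ k) (hkp : k ≤ p) (hh : r < h) :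
    ∃ A : Finset (ZMod p), A.card = k ∧
      (genSumset h r A).ncard ≤ min p (h * (k - 1) - r * (r - 1) + 1) := by
  haveI : NeZero p := ⟨hp.pos.ne'⟩
  set A : Finset (ZMod p) := (Finset.range k).image (Nat.cast : ℕ → ZMod p) with hA
  have hval : ∀ x ∈ A, (x : ZMod p).val < k := by
    intro x hx
    rw [hA, Finset.mem_image] at hx
    obtain ⟨n, hn, rfl⟩ := hx
    rw [Finset.mem_range] at hn
    rw [ZMod.val_cast_of_lt (lt_of_lt_of_le hn hkp)]
    exact hn
  have hAcard : A.card = k := by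
    rw [hA, Finset.card_image_of_injOn, Finset.card_range]
    intro a ha b hb hab
    have ha' : a < p := lt_of_lt_of_le (Finset.mem_range.mp ha) hkp
    have hb' : b < p := lt_of_lt_of_le (Finset.mem_range.mp hb) hkp
    have := congrArg ZMod.val hab
    rwa [ZMod.val_cast_of_lt ha', ZMod.val_cast_of_lt hb'] at this
  refine ⟨A, hAcard, ?_⟩
  set c := r * (r - 1) / 2 with hc
  have hcc : c + c = r * (r - 1) := by
    have hev : Even (r * (r - 1)) := by
      have := Nat.even_mul_succ_self (r - 1)
      rw [Nat.sub_add_cancel hr] at this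
      rwa [mul_comm]
    obtain ⟨m, hm⟩ := hev
    omega
  have hrange : ∀ n, ∑ i ∈ Finset.range n, i = n * (n - 1) / 2 := by
    intro n
    have := Finset.sum_range_id_mul_two n
    omega
  have hbig : r * (r - 1) ≤ h * (k - 1) := by
    calc r * (r - 1) ≤ h * (r - 1) := Nat.mul_le_mul_right _ (le_of_lt hh)
    _ ≤ h * (k - 1) := Nat.mul_le_mul_left _ (by omega)
  -- every element of the sumset is a cast of a natural number in [c, h*(k-1) - c]
  have key : genSumset h r A ⊆ (fun n : ℕ => (n : ZMod p)) '' Set.Icc c (h * (k - 1) - c) := by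
    rintro x ⟨s, hsA, hcard, hdist, rfl⟩
    set t : Multiset ℕ := s.map ZMod.val with ht
    have htcard : Multiset.card t = h := by simp [ht, hcard]
    have htlt : ∀ n ∈ t, n < k := by
      intro n hn
      rw [ht, Multiset.mem_map] at hn
      obtain ⟨y, hy, rfl⟩ := hn
      exact hval y (hsA (Multiset.mem_toFinset.mpr hy))
    have htfin : t.toFinset = s.toFinset.image ZMod.val := Multiset.toFinset_map _ _
    have htdist : r ≤ t.toFinset.card := by
      rw [htfin, Finset.card_image_of_injOn (fun a _ b _ hab => ZMod.val_injective p hab)]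
      exact hdist
    have hsum_eq : ((t.sum : ℕ) : ZMod p) = s.sum := by
      rw [Nat.cast_multiset_sum, ht, Multiset.map_map]
      congr 1
      rw [show ((Nat.cast : ℕ → ZMod p) ∘ ZMod.val) = id from funext fun y =>
        ZMod.natCast_rightInverse y]
      simp
    -- lower bound
    have hlow : c ≤ t.sum := by
      have h1 := multiset_sum_lower t
      have h2 : ∑ i ∈ Finset.range r, i ≤ ∑ i ∈ Finset.range t.toFinset.card, i :=
        Finset.sum_le_sum_of_subset (Finset.range_subset_range.mpr htdist)
      rw [hrange r] at h2
      omega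
    -- upper bound via the reflected multiset
    have hupp : t.sum ≤ h * (k - 1) - c := by
      set t' : Multiset ℕ := t.map (fun n => k - 1 - n) with ht'
      have ht'dist : r ≤ t'.toFinset.card := by
        rw [ht', Multiset.toFinset_map]
        rw [Finset.card_image_of_injOn]
        · exact htdist
        · intro a ha b hb hab
          have ha' : a < k := htlt a (Multiset.mem_toFinset.mp ha)
          have hb' : b < k := htlt b (Multiset.mem_toFinset.mp hb)
          have hab' : k - 1 - a = k - 1 - b := hab
          omega
      have ht'low : c ≤ t'.sum := by
        have h1 := multiset_sum_lower t'
        have h2 : ∑ i ∈ Finset.range r, i ≤ ∑ i ∈ Finset.range t'.toFinset.card, i :=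
          Finset.sum_le_sum_of_subset (Finset.range_subset_range.mpr ht'dist)
        rw [hrange r] at h2
        omega
      have hadd : t'.sum + t.sum = h * (k - 1) := by
        have : t'.sum + t.sum = (t.map (fun n => (k - 1 - n) + n)).sum := by
          rw [Multiset.sum_map_add]
          congr 1
          simp [Multiset.map_id']
        rw [this, Multiset.map_congr rfl (fun n hn => show k - 1 - n + n = k - 1 by
          have := htlt n hn; omega : ∀ n ∈ t, (fun n => (k - 1 - n) + n) n = k - 1)]
        simp [Multiset.map_const', htcard, mul_comm]
      omega
    exact ⟨t.sum, ⟨hlow, hupp⟩, hsum_eq⟩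
  have hfin : (Set.Icc c (h * (k - 1) - c)).Finite := Set.finite_Icc _ _
  have hIccCard : (Set.Icc c (h * (k - 1) - c)).ncard = h * (k - 1) - r * (r - 1) + 1 := by
    rw [← Finset.coe_Icc, Set.ncard_coe_finset, Nat.card_Icc]
    omega
  refine le_min ?_ ?_
  · -- bound by p
    have h1 : (genSumset h r A).ncard ≤ (Set.univ : Set (ZMod p)).ncard :=
      Set.ncard_le_ncard (Set.subset_univ _) Set.finite_univ
    have h2 : (Set.univ : Set (ZMod p)).ncard = p := by
      rw [Set.ncard_univ, Nat.card_eq_fintype_card, ZMod.card]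
    omega
  · calc (genSumset h r A).ncard
        ≤ ((fun n : ℕ => (n : ZMod p)) '' Set.Icc c (h * (k - 1) - c)).ncard :=
          Set.ncard_le_ncard key (hfin.image _)
      _ ≤ (Set.Icc c (h * (k - 1) - c)).ncard := Set.ncard_image_le hfin
      _ = h * (k - 1) - r * (r - 1) + 1 := hIccCard
end

section
/- Let $k, h, r$ be positive integers with $2 \leq r \leq h$, and let $A$ be a set of integers with $|A| = k$. Then the sumset $h^{(\leq r)}A$, consisting of all integers expressible as a sum of $h$ elements of $A$ (with repetition allowed) using at most $r$ distinct elements of $A$, satisfies $|h^{(\leq r)}A| \geq hk - h + 1$. -/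
open Pointwise

/-- The sumset `h^{(≤ r)}A`: elements expressible as a sum of `h` elements of `A`
(with repetition allowed) using at most `r` distinct elements of `A`. -/
def leSumset {G : Type*} [AddCommGroup G] [DecidableEq G] (h r : ℕ) (A : Finset G) : Set G :=
  {x | ∃ s : Multiset G, s.toFinset ⊆ A ∧ Multiset.card s = h ∧
      s.toFinset.card ≤ r ∧ s.sum = x}

theorem leSumset_card_lower_bound_int (k h r : ℕ) (hk : 1 ≤ k) (hr : 2 ≤ r) (hrh : r ≤ h)
    (A : Finset ℤ) (hA : A.card = k) :
    h * k - h + 1 ≤ (leSumset h r A).ncard := by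
  have h2 : 2 ≤ h := le_trans hr hrh
  have hpos : 0 < h := by omega
  set a : ℕ → ℤ := fun i => ((A.orderIsoOfFin hA ⟨min i (k-1), by omega⟩ : ↥A) : ℤ) with ha_def
  have ha_mem : ∀ i, a i ∈ A := fun i => (A.orderIsoOfFin hA ⟨min i (k-1), by omega⟩).2
  have ha_lt : ∀ i j, i < j → j ≤ k - 1 → a i < a j := by
    intro i j hij hj
    exact Subtype.coe_lt_coe.mpr ((A.orderIsoOfFin hA).strictMono
      (show (⟨min i (k-1), by omega⟩ : Fin k) < ⟨min j (k-1), by omega⟩ by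
        simp only [Fin.mk_lt_mk]; omega))
  set f : ℕ → ℤ := fun n =>
    ((h - n % h : ℕ) : ℤ) * a (n / h) + ((n % h : ℕ) : ℤ) * a (n / h + 1) with hf_def
  -- membership
  have hf_mem : ∀ n, f n ∈ leSumset h r A := by
    intro n
    have hmod : n % h < h := Nat.mod_lt n hpos
    refine ⟨Multiset.replicate (h - n % h) (a (n/h)) + Multiset.replicate (n % h) (a (n/h+1)),
      ?_, ?_, ?_, ?_⟩
    · intro z hz
      simp only [Multiset.toFinset_add, Finset.mem_union, Multiset.mem_toFinset,
        Multiset.mem_replicate] at hz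
      rcases hz with ⟨-, rfl⟩ | ⟨-, rfl⟩ <;> exact ha_mem _
    · simp only [Multiset.card_add, Multiset.card_replicate]; omega
    · have hsub2 : (Multiset.replicate (h - n % h) (a (n/h)) +
          Multiset.replicate (n % h) (a (n/h+1))).toFinset ⊆ {a (n/h), a (n/h+1)} := by
        intro z hz
        simp only [Multiset.toFinset_add, Finset.mem_union, Multiset.mem_toFinset,
          Multiset.mem_replicate] at hz
        simp only [Finset.mem_insert, Finset.mem_singleton]
        rcases hz with ⟨-, rfl⟩ | ⟨-, rfl⟩ <;> tauto
      calc _ ≤ ({a (n/h), a (n/h+1)} : Finset ℤ).card := Finset.card_le_card hsub2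
        _ ≤ ({a (n/h+1)} : Finset ℤ).card + 1 := Finset.card_insert_le _ _
        _ ≤ r := by rw [Finset.card_singleton]; omega
    · simp [Multiset.sum_replicate, nsmul_eq_mul, hf_def]
  -- step
  have hstep : ∀ n, n < h * (k-1) → f n < f (n+1) := by
    intro n hn
    have hmod : n % h < h := Nat.mod_lt n hpos
    have hdiv : n / h < k - 1 := Nat.div_lt_of_lt_mul (by omega)
    have hlt' : a (n/h) < a (n/h + 1) := ha_lt _ _ (by omega) (by omega)
    by_cases hc : n % h + 1 < h
    · have hm : (n+1)%h = n%h+1 := by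
        conv_lhs => rw [Nat.add_mod]
        rw [Nat.one_mod_eq_one.mpr (by omega), Nat.mod_eq_of_lt hc]
      have hd : (n+1)/h = n/h :=
        Nat.succ_div_of_not_dvd (fun hd => by have := Nat.mod_eq_zero_of_dvd hd; omega)
      simp only [hf_def, hm, hd]
      have c1 : ((h - n % h : ℕ) : ℤ) = (h : ℤ) - (n % h : ℕ) := by
        push_cast [Nat.cast_sub (le_of_lt hmod)]; ring
      have c2 : ((h - (n % h + 1) : ℕ) : ℤ) = (h : ℤ) - (n % h : ℕ) - 1 := by
        push_cast [Nat.cast_sub (by omega : n % h + 1 ≤ h)]; ring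
      rw [c1, c2]; push_cast; nlinarith [hlt']
    · have heq : n % h + 1 = h := by omega
      have hm : (n+1)%h = 0 := by
        conv_lhs => rw [Nat.add_mod]
        rw [Nat.one_mod_eq_one.mpr (by omega), heq, Nat.mod_self]
      have hd : (n+1)/h = n/h + 1 := Nat.succ_div_of_dvd (Nat.dvd_of_mod_eq_zero hm)
      have c1 : ((h - n % h : ℕ) : ℤ) = 1 := by omega
      have c2 : ((n % h : ℕ) : ℤ) = (h : ℤ) - 1 := by omega
      simp only [hf_def, hm, hd, Nat.sub_zero, Nat.cast_zero, c1, c2]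
      nlinarith [hlt']
  -- monotone
  have hmono : ∀ m n, m < n → n ≤ h * (k-1) → f m < f n := by
    intro m n
    induction n with
    | zero => omega
    | succ p ih =>
      intro hmn hle
      rcases Nat.lt_succ_iff_lt_or_eq.mp hmn with h' | h'
      · exact lt_trans (ih h' (by omega)) (hstep p (by omega))
      · subst h'; exact hstep m (by omega)
  -- finiteness
  have hfin : (leSumset h r A).Finite := by
    apply Set.Finite.subset
      ((Finset.image (fun m : Sym ℤ h => (m : Multiset ℤ).sum) (A.sym h)).finite_toSet)
    rintro x ⟨s, hsA, hcard, -, rfl⟩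
    simp only [Finset.coe_image, Set.mem_image, Finset.mem_coe]
    exact ⟨⟨s, hcard⟩, Finset.mem_sym_iff.mpr
      (fun z hz => hsA (Multiset.mem_toFinset.mpr hz)), rfl⟩
  -- conclude
  set S := Finset.image f (Finset.range (h * (k-1) + 1)) with hS
  have hsub : ↑S ⊆ leSumset h r A := by
    intro x hx
    simp only [hS, Finset.coe_image, Set.mem_image, Finset.mem_coe, Finset.mem_range] at hx
    obtain ⟨n, -, rfl⟩ := hx
    exact hf_mem n
  have hcardS : S.card = h * (k-1) + 1 := by
    rw [hS, Finset.card_image_of_injOn, Finset.card_range]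
    intro m hm n hn hmn
    simp only [Finset.coe_range, Set.mem_Iio] at hm hn
    rcases lt_trichotomy m n with h' | h' | h'
    · exact absurd hmn (ne_of_lt (hmono m n h' (by omega)))
    · exact h'
    · exact absurd hmn.symm (ne_of_lt (hmono n m h' (by omega)))
  calc h * k - h + 1 = h * (k-1) + 1 := by rw [Nat.mul_sub, Nat.mul_one]
    _ = S.card := hcardS.symm
    _ = (↑S : Set ℤ).ncard := (Set.ncard_coe_finset S).symm
    _ ≤ (leSumset h r A).ncard := Set.ncard_le_ncard hsub hfin
end
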